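/- arXiv:1409.8535 — 7 statements merged into one kernel-verified Lean document; each statement's English description precedes it below -/
import Mathlib

section
/- Let k ≥ 1, let d₁, …, d_k ∈ ℤ and L₁, …, L_k be positive integers, and suppose that both G := {Σᵢ₌₁ᵏ aᵢdᵢ : aᵢ ∈ ℤ, |aᵢ| ≤ Lᵢ} and G'' := {Σᵢ₌₁ᵏ aᵢdᵢ : aᵢ ∈ ℤ, |aᵢ| ≤ 4Lᵢ} are proper generalized arithmetic progressions. Then there exist a constant c depending only on k (one may take c = 4ᵏ·(k+1)!) and integers d₁', …, d_k' such that the map φ : G → ℤ defined by φ(Σᵢ₌₁ᵏ aᵢdᵢ) = Σᵢ₌₁ᵏ aᵢdᵢ' (for |aᵢ| ≤ Lᵢ) is well-defined, is an order-preserving Freiman 2-isomorphism, and satisfies |φ(x)| ≤ c·|G| for every x ∈ G. -/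
/-- `φ` is an order-preserving Freiman 2-isomorphism on the finite set `A ⊆ ℤ`. -/
def IsOrderPresFreiman2Iso (A : Finset ℤ) (φ : ℤ → ℤ) : Prop :=
  (∀ a ∈ A, ∀ b ∈ A, (a < b ↔ φ a < φ b)) ∧
  (∀ a ∈ A, ∀ b ∈ A, ∀ c ∈ A, ∀ d ∈ A, (a + b = c + d ↔ φ a + φ b = φ c + φ d))

/-- The generalized arithmetic progression `{∑ aᵢdᵢ : |aᵢ| ≤ Lᵢ}`, as a finite set. -/
noncomputable def gap (k : ℕ) (d : Fin k → ℤ) (L : Fin k → ℕ) : Finset ℤ :=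
  (Fintype.piFinset (fun i => Finset.Icc (-(L i : ℤ)) (L i))).image
    (fun a => ∑ i, a i * d i)

/-!
The vectors `v` of the box `|vᵢ| ≤ 4Lᵢ` with `v ⬝ᵥ d > 0` form a finite set `S`, and the
polyhedron `{w ∈ ℚᵏ : v ⬝ᵥ w ≥ 1 for all v ∈ S}` contains `d`. It is pointed because `S`
contains `eᵢ` or `-eᵢ` for each `i` (`dᵢ ≠ 0` by properness), so it has a vertex `w`: a
point at which `k` linearly independent rows `A ⊆ S` are tight. By Cramer's rule
`±det A • w` is the integer vector `d' = ±cramer A 1`, still positive on `S`, and each `d'ᵢ`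
is a determinant with one column of ones, hence at most `k! ∏_{j ≠ i} 4Lⱼ`. Positivity on `S`
makes `d` and `d'` induce the same signs on the whole `4L`-box, which contains every
`a + b - (c + e)` with `a, b, c, e` in the `L`-box: this is the order and Freiman property
of `φ`, and `|φ| ≤ 4ᵏ (k+1)! |G|` is a direct estimate from the bound on `d'`.
-/

open Finset Matrix

theorem exists_linearIndependent_of_span_eq_top {ι K : Type*} [Fintype ι] [Field K]
    {s : Set (ι → K)} (hs : Submodule.span K s = ⊤) :
    ∃ A : ι → ι → K, (∀ i, A i ∈ s) ∧ LinearIndependent K A := by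
  obtain ⟨b, hbs, hspan, hli⟩ := exists_linearIndependent K s
  let B := Module.Basis.mk hli (by rw [Subtype.range_coe, hspan, hs])
  let e := B.indexEquiv (Pi.basisFun K ι)
  exact ⟨fun i => e.symm i, fun i => hbs (e.symm i).2, hli.comp _ e.symm.injective⟩

theorem Matrix.abs_det_le_factorial_mul_prod {n R : Type*} [Fintype n] [DecidableEq n]
    [CommRing R] [LinearOrder R] [IsStrictOrderedRing R]
    (B : Matrix n n R) (c : n → R) (hB : ∀ i j, |B i j| ≤ c j) :
    |B.det| ≤ (Fintype.card n).factorial * ∏ j, c j := by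
  calc |B.det| ≤ ∑ σ : Equiv.Perm n, |Equiv.Perm.sign σ • ∏ j, B (σ j) j| := by
        rw [det_apply]; exact abs_sum_le_sum_abs _ _
    _ ≤ ∑ _σ : Equiv.Perm n, ∏ j, c j := by
        gcongr with σ
        rw [Units.smul_def, zsmul_eq_mul, abs_mul, abs_unit_intCast, one_mul, abs_prod]
        exact prod_le_prod (fun j _ => abs_nonneg _) fun j _ => hB _ _
    _ = (Fintype.card n).factorial * ∏ j, c j := by
        rw [sum_const, Finset.card_univ, Fintype.card_perm, nsmul_eq_mul]

theorem Matrix.abs_cramer_le {n R : Type*} [Fintype n] [DecidableEq n]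
    [CommRing R] [LinearOrder R] [IsStrictOrderedRing R]
    (A : Matrix n n R) (c : n → R) (hA : ∀ i j, |A i j| ≤ c j) (i : n) :
    |cramer A 1 i| ≤ (Fintype.card n).factorial * ∏ j ∈ univ.erase i, c j := by
  rw [cramer_apply, ← one_mul (∏ j ∈ univ.erase i, c j), ← sdiff_singleton_eq_erase,
    ← prod_update_of_mem (mem_univ i)]
  refine abs_det_le_factorial_mul_prod _ _ fun r j => ?_
  rcases eq_or_ne j i with rfl | hj
  · simp
  · simpa [updateCol_ne hj, hj] using hA r j

theorem Matrix.intCast_comp_cramer_one {ι : Type*} [Fintype ι] [DecidableEq ι]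
    (A : Matrix ι ι ℤ) (hA : A.det ≠ 0) (w : ι → ℚ) (hw : A.map Int.cast *ᵥ w = 1) :
    Int.cast ∘ cramer A 1 = (A.det : ℚ) • w := by
  have hunit : IsUnit (A.map Int.cast : Matrix ι ι ℚ) := by
    rw [isUnit_iff_isUnit_det, ← Int.cast_det, isUnit_iff_ne_zero]
    exact_mod_cast hA
  refine mulVec_injective_iff_isUnit.mpr hunit ?_
  ext i
  have := (Int.castRingHom ℚ).map_mulVec A (cramer A 1) i
  rw [mulVec_cramer] at this
  rw [mulVec_smul, hw]
  simpa using this.symm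

theorem exists_ne_zero_forall_dotProduct_eq_zero {ι K : Type*} [Fintype ι] [Field K]
    {p : Submodule K (ι → K)} (hp : p ≠ ⊤) : ∃ u ≠ 0, ∀ x ∈ p, x ⬝ᵥ u = 0 := by
  classical
  obtain ⟨f, hf, hfp⟩ := Submodule.exists_dual_map_eq_bot_of_lt_top hp.lt_top inferInstance
  obtain ⟨u, rfl⟩ := (dotProductEquiv K ι).surjective f
  refine ⟨u, fun hu => hf (by simp [hu]), fun x hx => ?_⟩
  have := Submodule.mem_map_of_mem (f := dotProductEquiv K ι u) hx
  rw [hfp, Submodule.mem_bot] at this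
  rw [dotProduct_comm]
  exact this

section Vertex

variable {ι K : Type*} [Fintype ι] [Field K] [LinearOrder K] [IsStrictOrderedRing K]

/-- A feasible `w` is a vertex of `{w | ∀ v ∈ S, 1 ≤ v ⬝ᵥ w}` exactly when this is `⊤`. -/
def tightSpan (S : Finset (ι → K)) (w : ι → K) : Submodule K (ι → K) :=
  Submodule.span K {v | v ∈ S ∧ v ⬝ᵥ w = 1}

theorem exists_tightSpan_lt_of_dotProduct_neg {S : Finset (ι → K)} {w u v₁ : ι → K}
    (hw : ∀ v ∈ S, 1 ≤ v ⬝ᵥ w) (hu : ∀ x ∈ tightSpan S w, x ⬝ᵥ u = 0)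
    (hv₁ : v₁ ∈ S) (hv₁u : v₁ ⬝ᵥ u < 0) :
    ∃ w', (∀ v ∈ S, 1 ≤ v ⬝ᵥ w') ∧ tightSpan S w < tightSpan S w' := by
  classical
  -- Move from `w` along `u` until the first constraint `v₀` with `v₀ ⬝ᵥ u < 0` becomes tight.
  set r : (ι → K) → K := fun v => (v ⬝ᵥ w - 1) / -(v ⬝ᵥ u)
  obtain ⟨v₀, hv₀, hmin⟩ := (S.filter (· ⬝ᵥ u < 0)).exists_min_image r ⟨v₁, by simp [hv₁, hv₁u]⟩
  simp only [mem_filter, and_imp] at hv₀ hmin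
  have hdot : ∀ v, v ⬝ᵥ (w + r v₀ • u) = v ⬝ᵥ w + r v₀ * v ⬝ᵥ u := fun v => by
    rw [dotProduct_add, dotProduct_smul, smul_eq_mul]
  have hr₀ : 0 ≤ r v₀ := div_nonneg (by linarith [hw v₀ hv₀.1]) (by linarith [hv₀.2])
  have htight : ∀ v ∈ S, v ⬝ᵥ w = 1 → v ⬝ᵥ (w + r v₀ • u) = 1 := fun v hv hv1 => by
    rw [hdot, hu v (Submodule.subset_span ⟨hv, hv1⟩), hv1, mul_zero, add_zero]
  refine ⟨w + r v₀ • u, fun v hv => ?_, lt_of_le_of_ne ?_ fun h => ?_⟩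
  · rw [hdot]
    rcases le_or_gt 0 (v ⬝ᵥ u) with h | h
    · nlinarith [hw v hv]
    · have := hmin v hv h
      rw [le_div_iff₀ (neg_pos.mpr h)] at this
      linarith
  · exact Submodule.span_mono fun v ⟨hv, hv1⟩ => ⟨hv, htight v hv hv1⟩
  · have hv₀w : v₀ ⬝ᵥ (w + r v₀ • u) = 1 := by
      rw [hdot]; simp only [r]; field_simp [hv₀.2.ne]; ring
    exact hv₀.2.ne (hu v₀ (h ▸ Submodule.subset_span ⟨hv₀.1, hv₀w⟩))

theorem exists_tightSpan_lt {S : Finset (ι → K)} {w : ι → K}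
    (hS : ∀ u ≠ 0, ∃ v ∈ S, v ⬝ᵥ u ≠ 0) (hw : ∀ v ∈ S, 1 ≤ v ⬝ᵥ w) (htop : tightSpan S w ≠ ⊤) :
    ∃ w', (∀ v ∈ S, 1 ≤ v ⬝ᵥ w') ∧ tightSpan S w < tightSpan S w' := by
  obtain ⟨u, hu0, hu⟩ := exists_ne_zero_forall_dotProduct_eq_zero htop
  obtain ⟨v₁, hv₁, hv₁u⟩ := hS u hu0
  rcases hv₁u.lt_or_gt with h | h
  · exact exists_tightSpan_lt_of_dotProduct_neg hw hu hv₁ h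
  · refine exists_tightSpan_lt_of_dotProduct_neg hw (u := -u) (fun x hx => ?_) hv₁ ?_
    · rw [dotProduct_neg, hu x hx, neg_zero]
    · rwa [dotProduct_neg, neg_neg_iff_pos]

theorem exists_tightSpan_eq_top {S : Finset (ι → K)} {w₀ : ι → K}
    (hS : ∀ u ≠ 0, ∃ v ∈ S, v ⬝ᵥ u ≠ 0) (hw₀ : ∀ v ∈ S, 1 ≤ v ⬝ᵥ w₀) :
    ∃ w, (∀ v ∈ S, 1 ≤ v ⬝ᵥ w) ∧ tightSpan S w = ⊤ := by
  by_contra! h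
  have : ∀ n : ℕ, ∃ w, (∀ v ∈ S, 1 ≤ v ⬝ᵥ w) ∧ n ≤ Module.finrank K (tightSpan S w) := by
    intro n
    induction n with
    | zero => exact ⟨w₀, hw₀, Nat.zero_le _⟩
    | succ n ih =>
      obtain ⟨w, hw, hn⟩ := ih
      obtain ⟨w', hw', hlt⟩ := exists_tightSpan_lt hS hw (h w hw)
      exact ⟨w', hw', hn.trans_lt (Submodule.finrank_lt_finrank_of_lt hlt)⟩
  obtain ⟨w, -, hw⟩ := this (Fintype.card ι + 1)
  have := (tightSpan S w).finrank_le
  rw [Module.finrank_fintype_fun_eq_card] at this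
  omega

end Vertex

theorem exists_dotProduct_pos_abs_le {ι : Type*} [Fintype ι] [DecidableEq ι]
    (S : Finset (ι → ℤ)) (M : ι → ℤ) (hM : ∀ v ∈ S, ∀ i, |v i| ≤ M i)
    (hS : ∀ u : ι → ℚ, u ≠ 0 → ∃ v ∈ S, (Int.cast ∘ v) ⬝ᵥ u ≠ 0)
    {d : ι → ℤ} (hd : ∀ v ∈ S, 0 < v ⬝ᵥ d) :
    ∃ d' : ι → ℤ, (∀ v ∈ S, 0 < v ⬝ᵥ d') ∧
      ∀ i, |d' i| ≤ (Fintype.card ι).factorial * ∏ j ∈ univ.erase i, M j := by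
  classical
  have hcast (v w : ι → ℤ) :
      (Int.cast ∘ v : ι → ℚ) ⬝ᵥ (Int.cast ∘ w) = ((v ⬝ᵥ w : ℤ) : ℚ) :=
    ((Int.castRingHom ℚ).map_dotProduct v w).symm
  have hd₀ : ∀ x ∈ S.image (Int.cast ∘ ·), 1 ≤ x ⬝ᵥ (Int.cast ∘ d : ι → ℚ) := by
    intro _ hx
    obtain ⟨v, hv, rfl⟩ := mem_image.mp hx
    rw [hcast]
    exact_mod_cast hd v hv
  obtain ⟨w, hw, htop⟩ := exists_tightSpan_eq_top (by simpa using hS) hd₀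
  obtain ⟨A, hA, hli⟩ := exists_linearIndependent_of_span_eq_top htop
  choose Z hZS hZA using fun i => mem_image.mp (hA i).1
  set Az := Matrix.of Z
  have hZ : Az.map Int.cast = Matrix.of A := by ext i j; exact congrFun (hZA i) j
  have hdet : Az.det ≠ 0 := by
    have : IsUnit (Matrix.of A) := linearIndependent_rows_iff_isUnit.mp hli
    rw [isUnit_iff_isUnit_det, isUnit_iff_ne_zero, ← hZ, ← Int.cast_det] at this
    exact_mod_cast this
  have hcramer := intCast_comp_cramer_one Az hdet w (by ext i; rw [hZ]; exact (hA i).2)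
  refine ⟨Az.det.sign • cramer Az 1, fun v hv => ?_, fun i => ?_⟩
  · have hvw : 1 ≤ (Int.cast ∘ v : ι → ℚ) ⬝ᵥ w := hw _ (mem_image_of_mem _ hv)
    have hval : ((v ⬝ᵥ (Az.det.sign • cramer Az 1) : ℤ) : ℚ) =
        |(Az.det : ℚ)| * ((Int.cast ∘ v : ι → ℚ) ⬝ᵥ w) := by
      rw [dotProduct_smul, smul_eq_mul, Int.cast_mul, ← hcast, hcramer, dotProduct_smul,
        smul_eq_mul, ← mul_assoc, ← Int.cast_mul, Int.sign_mul_self_eq_abs, Int.cast_abs]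
    have hpos : (0 : ℚ) < ((v ⬝ᵥ (Az.det.sign • cramer Az 1) : ℤ) : ℚ) := by
      rw [hval]
      exact mul_pos (abs_pos.mpr (by exact_mod_cast hdet)) (by linarith)
    exact_mod_cast hpos
  · rw [Pi.smul_apply, smul_eq_mul, abs_mul, Int.abs_sign_of_ne_zero hdet, one_mul]
    exact abs_cramer_le _ M (fun r j => hM _ (hZS r) j) i

theorem sign_dotProduct_eq_of_pos_imp_pos {ι R : Type*} [Fintype ι] [CommRing R] [LinearOrder R]
    [IsStrictOrderedRing R] {B : Set (ι → R)} {d d' : ι → R} (hneg : ∀ v ∈ B, -v ∈ B)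
    (hd : ∀ v ∈ B, v ⬝ᵥ d = 0 → v = 0) (hd' : ∀ v ∈ B, 0 < v ⬝ᵥ d → 0 < v ⬝ᵥ d')
    {v : ι → R} (hv : v ∈ B) : SignType.sign (v ⬝ᵥ d) = SignType.sign (v ⬝ᵥ d') := by
  rcases lt_trichotomy (v ⬝ᵥ d) 0 with h | h | h
  · have := hd' (-v) (hneg v hv) (by rw [neg_dotProduct]; linarith)
    rw [neg_dotProduct, neg_pos] at this
    rw [sign_neg h, sign_neg this]
  · simp [hd v hv h]
  · rw [sign_pos h, sign_pos (hd' v hv h)]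

theorem exists_sign_dotProduct_eq_abs_le {ι : Type*} [Fintype ι] [DecidableEq ι]
    (B : Finset (ι → ℤ)) (M : ι → ℤ) (hM : ∀ v ∈ B, ∀ i, |v i| ≤ M i)
    (hneg : ∀ v ∈ B, -v ∈ B) (hsingle : ∀ i, Pi.single i 1 ∈ B) {d : ι → ℤ}
    (hd : ∀ v ∈ B, v ⬝ᵥ d = 0 → v = 0) :
    ∃ d' : ι → ℤ, (∀ v ∈ B, SignType.sign (v ⬝ᵥ d) = SignType.sign (v ⬝ᵥ d')) ∧
      ∀ i, |d' i| ≤ (Fintype.card ι).factorial * ∏ j ∈ univ.erase i, M j := by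
  have hspan : ∀ u : ι → ℚ, u ≠ 0 →
      ∃ v ∈ B.filter (0 < · ⬝ᵥ d), (Int.cast ∘ v) ⬝ᵥ u ≠ 0 := by
    intro u hu
    obtain ⟨i, hi⟩ := Function.ne_iff.mp hu
    have hdi : d i ≠ 0 := fun h => by simpa using hd _ (hsingle i) (by simp [h])
    rcases hdi.lt_or_gt with h | h
    · refine ⟨-Pi.single i 1, mem_filter.mpr ⟨hneg _ (hsingle i), by simpa using h⟩, ?_⟩
      simpa [dotProduct, Pi.single_apply] using hi
    · refine ⟨Pi.single i 1, mem_filter.mpr ⟨hsingle i, by simpa using h⟩, ?_⟩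
      simpa [dotProduct, Pi.single_apply] using hi
  obtain ⟨d', hpos, hbound⟩ := exists_dotProduct_pos_abs_le _ M
    (fun v hv => hM v (mem_filter.mp hv).1) hspan (fun v hv => (mem_filter.mp hv).2)
  exact ⟨d', fun v hv => sign_dotProduct_eq_of_pos_imp_pos (B := ↑B) hneg hd
    (fun v hv h => hpos v (mem_filter.mpr ⟨hv, h⟩)) hv, hbound⟩

section Box

variable {ι : Type*} [Fintype ι] [DecidableEq ι]

noncomputable def centeredBox (m : ι → ℤ) : Finset (ι → ℤ) :=
  Fintype.piFinset fun i => Icc (-m i) (m i)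

theorem mem_centeredBox {m a : ι → ℤ} : a ∈ centeredBox m ↔ ∀ i, |a i| ≤ m i := by
  simp [centeredBox, abs_le]

theorem coe_centeredBox (m : ι → ℤ) : (centeredBox m : Set (ι → ℤ)) = {a | ∀ i, |a i| ≤ m i} :=
  Set.ext fun _ => mem_centeredBox

theorem card_centeredBox (m : ι → ℕ) : #(centeredBox fun i => (m i : ℤ)) = ∏ i, (2 * m i + 1) := by
  rw [centeredBox, Fintype.card_piFinset]
  refine prod_congr rfl fun i _ => ?_
  rw [Int.card_Icc]
  omega

theorem neg_mem_centeredBox {m a : ι → ℤ} (ha : a ∈ centeredBox m) : -a ∈ centeredBox m := by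
  simpa [mem_centeredBox] using ha

theorem add_sub_add_mem_centeredBox {m a b c e : ι → ℤ} (ha : a ∈ centeredBox m)
    (hb : b ∈ centeredBox m) (hc : c ∈ centeredBox m) (he : e ∈ centeredBox m) :
    a + b - (c + e) ∈ centeredBox fun i => 4 * m i := by
  rw [mem_centeredBox] at *
  intro i
  have := abs_le.mp (ha i); have := abs_le.mp (hb i)
  have := abs_le.mp (hc i); have := abs_le.mp (he i)
  simp only [Pi.add_apply, Pi.sub_apply, abs_le]
  constructor <;> linarith

theorem zero_mem_centeredBox {m : ι → ℤ} (hm : 0 ≤ m) : 0 ∈ centeredBox m :=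
  mem_centeredBox.mpr fun i => by simpa using hm i

theorem single_mem_centeredBox {m : ι → ℤ} (hm : ∀ j, 1 ≤ m j) (i : ι) :
    Pi.single i 1 ∈ centeredBox m := by
  refine mem_centeredBox.mpr fun j => ?_
  rcases eq_or_ne j i with rfl | hj
  · simpa using hm j
  · simpa [hj] using zero_le_one.trans (hm j)

end Box

theorem isOrderPresFreiman2Iso_image_dotProduct {ι : Type*} [Fintype ι] {B : Finset (ι → ℤ)}
    {d d' : ι → ℤ} {φ : ℤ → ℤ} (hφ : ∀ a ∈ B, φ (a ⬝ᵥ d) = a ⬝ᵥ d')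
    (hsign : ∀ a ∈ B, ∀ b ∈ B, ∀ c ∈ B, ∀ e ∈ B,
      SignType.sign ((a + b - (c + e)) ⬝ᵥ d) = SignType.sign ((a + b - (c + e)) ⬝ᵥ d')) :
    IsOrderPresFreiman2Iso (B.image (· ⬝ᵥ d)) φ := by
  have hexpand : ∀ a b c e f : ι → ℤ,
      (a + b - (c + e)) ⬝ᵥ f = a ⬝ᵥ f + b ⬝ᵥ f - (c ⬝ᵥ f + e ⬝ᵥ f) := fun _ _ _ _ _ => by
    simp only [sub_dotProduct, add_dotProduct]
  simp only [IsOrderPresFreiman2Iso, mem_image, forall_exists_index, and_imp]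
  constructor
  · rintro _ a ha rfl _ b hb rfl
    have h := hsign b hb b hb a ha b hb
    rw [hexpand, hexpand] at h
    have hlt : ∀ x y : ℤ, x < y ↔ 0 < y + y - (x + y) := fun x y => by
      constructor <;> intro <;> linarith
    rw [hφ a ha, hφ b hb, hlt, hlt (a ⬝ᵥ d'), ← sign_eq_one_iff, h, sign_eq_one_iff]
  · rintro _ a ha rfl _ b hb rfl _ c hc rfl _ e he rfl
    have h := hsign a ha b hb c hc e he
    rw [hexpand, hexpand] at h
    rw [hφ a ha, hφ b hb, hφ c hc, hφ e he, ← sub_eq_zero, ← sign_eq_zero_iff, h,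
      sign_eq_zero_iff, sub_eq_zero]

theorem abs_dotProduct_le_of_abs_le {ι : Type*} [Fintype ι] [DecidableEq ι] {a d' : ι → ℤ}
    {L : ι → ℕ} (ha : ∀ i, |a i| ≤ L i)
    (hd' : ∀ i, |d' i| ≤ (Fintype.card ι).factorial * ∏ j ∈ univ.erase i, 4 * (L j : ℤ)) :
    |a ⬝ᵥ d'| ≤
      4 ^ Fintype.card ι * (Fintype.card ι + 1).factorial * ∏ i, (2 * (L i : ℤ) + 1) := by
  set n := Fintype.card ι
  have hterm : ∀ i, |a i| * |d' i| ≤ n.factorial * ∏ j, 4 * (L j : ℤ) := fun i => by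
    have : (0 : ℤ) ≤ n.factorial * ∏ j ∈ univ.erase i, 4 * (L j : ℤ) := by positivity
    calc |a i| * |d' i| ≤ L i * (n.factorial * ∏ j ∈ univ.erase i, 4 * (L j : ℤ)) :=
          mul_le_mul (ha i) (hd' i) (abs_nonneg _) (by positivity)
      _ ≤ n.factorial * (4 * L i * ∏ j ∈ univ.erase i, 4 * (L j : ℤ)) := by nlinarith
      _ = n.factorial * ∏ j, 4 * (L j : ℤ) := by
          rw [mul_prod_erase univ (fun j => 4 * (L j : ℤ)) (mem_univ i)]
  have hfact : (n : ℤ) * n.factorial ≤ (n + 1).factorial := by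
    rw [Nat.factorial_succ]; push_cast; nlinarith [n.factorial_pos]
  calc |a ⬝ᵥ d'| ≤ ∑ i, |a i * d' i| := abs_sum_le_sum_abs _ _
    _ = ∑ i, |a i| * |d' i| := by simp only [abs_mul]
    _ ≤ ∑ _i : ι, n.factorial * ∏ j, 4 * (L j : ℤ) := sum_le_sum fun i _ => hterm i
    _ = n * n.factorial * ∏ j, 4 * (L j : ℤ) := by
        rw [sum_const, card_univ, nsmul_eq_mul, mul_assoc]
    _ ≤ (n + 1).factorial * ∏ j, 4 * (2 * (L j : ℤ) + 1) :=
        mul_le_mul hfact (prod_le_prod (fun _ _ => by positivity) fun _ _ => by omega)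
          (by positivity) (by positivity)
    _ = 4 ^ n * (n + 1).factorial * ∏ i, (2 * (L i : ℤ) + 1) := by
        rw [prod_mul_distrib, prod_const, card_univ]; ring

/-- For every `k ≥ 1` there is a constant `c` depending only on `k`, with
`c ≤ 4^k (k+1)!`, such that: if both `G = {∑ aᵢdᵢ : |aᵢ| ≤ Lᵢ}` and
`G'' = {∑ aᵢdᵢ : |aᵢ| ≤ 4Lᵢ}` are proper, then there are integers `d₁', …, d_k'`
such that `φ(∑ aᵢdᵢ) = ∑ aᵢdᵢ'` is well-defined on `G`, is an order-preserving
Freiman 2-isomorphism, and `|φ(x)| ≤ c|G|` for all `x ∈ G`. -/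
theorem convex_geometry_lemma :
    ∀ k : ℕ, 1 ≤ k → ∃ c : ℝ, 0 < c ∧ c ≤ (4 : ℝ) ^ k * (Nat.factorial (k + 1)) ∧
      ∀ (d : Fin k → ℤ) (L : Fin k → ℕ), (∀ i, 0 < L i) →
        Set.InjOn (fun a : Fin k → ℤ => ∑ i, a i * d i)
          {a | ∀ i, |a i| ≤ (L i : ℤ)} →
        Set.InjOn (fun a : Fin k → ℤ => ∑ i, a i * d i)
          {a | ∀ i, |a i| ≤ 4 * (L i : ℤ)} →
        ∃ (d' : Fin k → ℤ) (φ : ℤ → ℤ),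
          (∀ a : Fin k → ℤ, (∀ i, |a i| ≤ (L i : ℤ)) →
            φ (∑ i, a i * d i) = ∑ i, a i * d' i) ∧
          IsOrderPresFreiman2Iso (gap k d L) φ ∧
          ∀ x ∈ gap k d L, (|φ x| : ℝ) ≤ c * ((gap k d L).card : ℝ) := by
  intro k _
  refine ⟨4 ^ k * (k + 1).factorial, by positivity, le_rfl, fun d L hL hinj hinj4 => ?_⟩
  set B := centeredBox fun i => (L i : ℤ)
  replace hinj : Set.InjOn (· ⬝ᵥ d) (B : Set (Fin k → ℤ)) := by rwa [coe_centeredBox]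
  replace hinj4 : Set.InjOn (· ⬝ᵥ d) (centeredBox fun i => 4 * (L i : ℤ) : Set (Fin k → ℤ)) := by
    rwa [coe_centeredBox]
  obtain ⟨d', hsign, hd'⟩ := exists_sign_dotProduct_eq_abs_le (d := d) _ _
    (fun _ => mem_centeredBox.mp) (fun _ => neg_mem_centeredBox)
    (single_mem_centeredBox fun i => by have := hL i; omega)
    fun v hv h => hinj4 hv (zero_mem_centeredBox fun i => by positivity) (by simpa using h)
  have hgap : gap k d L = B.image (· ⬝ᵥ d) := rfl
  let φ : ℤ → ℤ := fun x => Function.invFunOn (· ⬝ᵥ d) B x ⬝ᵥ d'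
  have hφ : ∀ a ∈ B, φ (a ⬝ᵥ d) = a ⬝ᵥ d' := fun a ha =>
    congrArg (· ⬝ᵥ d') (hinj.leftInvOn_invFunOn ha)
  refine ⟨d', φ, fun a ha => hφ a (mem_centeredBox.mpr ha), ?_, ?_⟩
  · rw [hgap]
    exact isOrderPresFreiman2Iso_image_dotProduct hφ fun a ha b hb c hc e he =>
      hsign _ (add_sub_add_mem_centeredBox ha hb hc he)
  · rw [hgap, card_image_of_injOn hinj, card_centeredBox]
    intro x hx
    obtain ⟨a, ha, rfl⟩ := mem_image.mp hx
    have := abs_dotProduct_le_of_abs_le (mem_centeredBox.mp ha) hd'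
    rw [Fintype.card_fin] at this
    rw [hφ a ha]
    exact_mod_cast this
end

section
/- Let k ≥ 1, let d₁, …, d_k ∈ ℤ and L₁, …, L_k be positive integers, and suppose that both G := {Σᵢ₌₁ᵏ aᵢdᵢ : aᵢ ∈ ℤ, |aᵢ| ≤ Lᵢ} and G'' := {Σᵢ₌₁ᵏ aᵢdᵢ : aᵢ ∈ ℤ, |aᵢ| ≤ 4Lᵢ} are proper generalized arithmetic progressions. Suppose d₁', …, d_k' ∈ ℤ satisfy: for every integer vector (a₁, …, a_k) with |aᵢ| ≤ 4Lᵢ for all i, if Σᵢ₌₁ᵏ aᵢdᵢ > 0 then Σᵢ₌₁ᵏ aᵢdᵢ' > 0. Then the map φ : G → ℤ defined by φ(Σᵢ₌₁ᵏ aᵢdᵢ) = Σᵢ₌₁ᵏ aᵢdᵢ' (for |aᵢ| ≤ Lᵢ) is well-defined and is an order-preserving Freiman 2-isomorphism. -/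
/-!
Write `f a = ∑ aᵢdᵢ` and `g a = ∑ aᵢdᵢ'`, both additive in `a`. Since the box `|aᵢ| ≤ 4Lᵢ` is
symmetric and `f` is injective on it, the hypothesis upgrades to `sign (f a) = sign (g a)` on
that box: a negative value of `f` is excluded by applying the hypothesis to `-a`, and `f a = 0`
forces `a = 0`. For `a, b, c, e` in the box `|aᵢ| ≤ Lᵢ` the vector `a + b - (c + e)` lies in the
`4L`-box, so `g` reproduces every comparison `f a < f b` and every additive relation
`f a + f b = f c + f e`; injectivity of `f` on the `L`-box makes `φ (f a) := g a` well defined.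
-/

open Matrix

def box {ι : Type*} (L : ι → ℤ) : Set (ι → ℤ) := {a | ∀ i, |a i| ≤ L i}

section Box

variable {ι : Type*} {L : ι → ℤ} {a b c e : ι → ℤ}

lemma zero_mem_box (hL : ∀ i, 0 ≤ L i) : 0 ∈ box L := fun i => by simpa using hL i

lemma neg_mem_box (ha : a ∈ box L) : -a ∈ box L := fun i => by simpa using ha i

lemma add_sub_add_mem_box (ha : a ∈ box L) (hb : b ∈ box L) (hc : c ∈ box L) (he : e ∈ box L) :
    a + b - (c + e) ∈ box (fun i => 4 * L i) := fun i => by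
  have := abs_le.mp (ha i); have := abs_le.mp (hb i)
  have := abs_le.mp (hc i); have := abs_le.mp (he i)
  simp only [Pi.sub_apply, Pi.add_apply, abs_le]
  constructor <;> linarith

end Box

section Sign

variable {M α β : Type*} [AddCommGroup M]
  [AddCommGroup α] [LinearOrder α] [IsOrderedAddMonoid α]
  [AddCommGroup β] [LinearOrder β] [IsOrderedAddMonoid β]

theorem sign_eq_of_pos_imp_pos (f : M →+ α) (g : M →+ β) {S : Set M}
    (hneg : ∀ x ∈ S, -x ∈ S) (hzero : 0 ∈ S) (hf : S.InjOn f)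
    (hfg : ∀ x ∈ S, 0 < f x → 0 < g x) {x : M} (hx : x ∈ S) :
    SignType.sign (f x) = SignType.sign (g x) := by
  rcases lt_trichotomy (f x) 0 with hlt | heq | hgt
  · have hg : 0 < g (-x) := hfg (-x) (hneg x hx) (by simpa using hlt)
    rw [sign_neg hlt, sign_neg (by simpa using hg)]
  · obtain rfl : x = 0 := hf hx hzero (by simpa using heq)
    simp
  · rw [sign_pos hgt, sign_pos (hfg x hx hgt)]

end Sign

theorem isOrderPresFreiman2Iso_of_sign_eq {M : Type*} [AddCommGroup M] (f g : M →+ ℤ)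
    {B : Set M} (hB : ∀ a ∈ B, ∀ b ∈ B, ∀ c ∈ B, ∀ e ∈ B,
      SignType.sign (f (a + b - (c + e))) = SignType.sign (g (a + b - (c + e))))
    {φ : ℤ → ℤ} (hφ : ∀ a ∈ B, φ (f a) = g a) {A : Finset ℤ} (hA : ∀ x ∈ A, ∃ a ∈ B, f a = x) :
    IsOrderPresFreiman2Iso A φ := by
  constructor
  · intro x hx y hy
    obtain ⟨a, ha, rfl⟩ := hA x hx
    obtain ⟨b, hb, rfl⟩ := hA y hy
    have h := hB b hb a ha a ha a ha
    rw [add_sub_add_right_eq_sub] at h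
    rw [hφ a ha, hφ b hb, ← sub_pos, ← sub_pos (b := g a), ← map_sub, ← map_sub,
      ← sign_eq_one_iff, h, sign_eq_one_iff]
  · intro x hx y hy z hz w hw
    obtain ⟨a, ha, rfl⟩ := hA x hx
    obtain ⟨b, hb, rfl⟩ := hA y hy
    obtain ⟨c, hc, rfl⟩ := hA z hz
    obtain ⟨e, he, rfl⟩ := hA w hw
    have h := hB a ha b hb c hc e he
    simp only [map_sub, map_add] at h
    rw [hφ a ha, hφ b hb, hφ c hc, hφ e he, ← sub_eq_zero, ← sub_eq_zero (a := g a + g b),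
      ← sign_eq_zero_iff, h, sign_eq_zero_iff]

theorem mem_gap_iff {k : ℕ} {d : Fin k → ℤ} {L : Fin k → ℕ} {x : ℤ} :
    x ∈ gap k d L ↔ ∃ a ∈ box (fun i => (L i : ℤ)), a ⬝ᵥ d = x := by
  simp only [gap, Finset.mem_image, Fintype.mem_piFinset, Finset.mem_Icc, box, Set.mem_ofPred_eq,
    abs_le, dotProduct]

theorem solution_gives_freiman_iso_general
    (k : ℕ) (d : Fin k → ℤ) (L : Fin k → ℕ)
    (hG : Set.InjOn (fun a : Fin k → ℤ => ∑ i, a i * d i)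
      {a | ∀ i, |a i| ≤ (L i : ℤ)})
    (hG'' : Set.InjOn (fun a : Fin k → ℤ => ∑ i, a i * d i)
      {a | ∀ i, |a i| ≤ 4 * (L i : ℤ)})
    (d' : Fin k → ℤ)
    (hd' : ∀ a : Fin k → ℤ, (∀ i, |a i| ≤ 4 * (L i : ℤ)) →
      0 < ∑ i, a i * d i → 0 < ∑ i, a i * d' i) :
    ∃ φ : ℤ → ℤ,
      (∀ a : Fin k → ℤ, (∀ i, |a i| ≤ (L i : ℤ)) →
        φ (∑ i, a i * d i) = ∑ i, a i * d' i) ∧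
      IsOrderPresFreiman2Iso (gap k d L) φ := by
  let f : (Fin k → ℤ) →+ ℤ := AddMonoidHom.mk' (· ⬝ᵥ d) fun a b => add_dotProduct a b d
  let g : (Fin k → ℤ) →+ ℤ := AddMonoidHom.mk' (· ⬝ᵥ d') fun a b => add_dotProduct a b d'
  let φ := Function.extend ((box fun i => (L i : ℤ)).domRestrict f) (fun a => g a.1) 0
  have hφ : ∀ a ∈ box (fun i => (L i : ℤ)), φ (f a) = g a := fun a ha =>
    hG.injective.extend_apply _ 0 ⟨a, ha⟩
  have hsign : ∀ x ∈ box (fun i => 4 * (L i : ℤ)), SignType.sign (f x) = SignType.sign (g x) :=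
    fun x hx => sign_eq_of_pos_imp_pos f g (fun _ => neg_mem_box)
      (zero_mem_box fun i => by positivity) hG'' hd' hx
  exact ⟨φ, hφ, isOrderPresFreiman2Iso_of_sign_eq f g
    (fun a ha b hb c hc e he => hsign _ (add_sub_add_mem_box ha hb hc he)) hφ
    fun x hx => mem_gap_iff.mp hx⟩

/-- If both `G = {∑ aᵢdᵢ : |aᵢ| ≤ Lᵢ}` and `G'' = {∑ aᵢdᵢ : |aᵢ| ≤ 4Lᵢ}` are
proper, and `(d₁', …, d_k')` satisfies: whenever `|aᵢ| ≤ 4Lᵢ` for all `i` and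
`∑ aᵢdᵢ > 0`, then `∑ aᵢdᵢ' > 0`; then `φ(∑ aᵢdᵢ) = ∑ aᵢdᵢ'` is well-defined on
`G` and is an order-preserving Freiman 2-isomorphism. -/
theorem solution_gives_freiman_iso
    (k : ℕ) (hk : 1 ≤ k) (d : Fin k → ℤ) (L : Fin k → ℕ) (hL : ∀ i, 0 < L i)
    (hG : Set.InjOn (fun a : Fin k → ℤ => ∑ i, a i * d i)
      {a | ∀ i, |a i| ≤ (L i : ℤ)})
    (hG'' : Set.InjOn (fun a : Fin k → ℤ => ∑ i, a i * d i)
      {a | ∀ i, |a i| ≤ 4 * (L i : ℤ)})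
    (d' : Fin k → ℤ)
    (hd' : ∀ a : Fin k → ℤ, (∀ i, |a i| ≤ 4 * (L i : ℤ)) →
      0 < ∑ i, a i * d i → 0 < ∑ i, a i * d' i) :
    ∃ φ : ℤ → ℤ,
      (∀ a : Fin k → ℤ, (∀ i, |a i| ≤ (L i : ℤ)) →
        φ (∑ i, a i * d i) = ∑ i, a i * d' i) ∧
      IsOrderPresFreiman2Iso (gap k d L) φ :=
  solution_gives_freiman_iso_general k d L hG hG'' d' hd'
end

section
/- For every real δ > 0 there exist constants c₁ > 0, c₃ > 0, a positive integer c₂, and a positive integer N such that the following holds. If n > N and A ⊆ [1, n] ∩ ℤ with |A| ≥ δn, then there exists a subset A' ⊆ A with |A'| ≥ c₁·|A| such that for at least c₃·|A|² pairs of integers (i, j) with 0 ≤ i < j < n/c₂ one has |A' ∩ [i·c₂, j·c₂)| = j − i. -/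
/-!
Cut `[0, K c)` into blocks of length `c` and walk through them from left to right, keeping the
deficit `D k` = (number of blocks passed) − (number of elements taken), and take
`min (D k + 1) |A ∩ block k|` elements of `A` from block `k`. The resulting `A'` has exactly
`j - i` elements in blocks `i, …, j - 1` whenever `D i = D j = 0`. Every nonempty block gives at
least one element, so `|A| ≤ c |A'| + c`; every block not taken entirely resets the deficit to `0`,
so with `c ≥ 4 / δ` at least `δ n / (2 c)` indices have zero deficit, and any two of them form a
good pair.
-/

open Finset

section GreedySchedule

variable (b : ℕ → ℕ)

-- The truncated subtraction makes this `greedyDeficit b k + 1 - greedyTake b k`.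
def greedyDeficit : ℕ → ℕ
  | 0 => 0
  | k + 1 => greedyDeficit k + 1 - b k

def greedyTake (k : ℕ) : ℕ := min (greedyDeficit b k + 1) (b k)

variable {b}

lemma greedyTake_le (k : ℕ) : greedyTake b k ≤ b k := min_le_right _ _

lemma greedyDeficit_succ_add_greedyTake (k : ℕ) :
    greedyDeficit b (k + 1) + greedyTake b k = greedyDeficit b k + 1 := by
  simp only [greedyDeficit, greedyTake]
  omega

lemma sum_greedyTake_add_greedyDeficit (m : ℕ) :
    ∑ k ∈ range m, greedyTake b k + greedyDeficit b m = m := by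
  induction m with
  | zero => simp [greedyDeficit]
  | succ m ih =>
    rw [sum_range_succ]
    have := greedyDeficit_succ_add_greedyTake (b := b) m
    omega

lemma sum_Ico_greedyTake_of_greedyDeficit_eq_zero {i j : ℕ} (hij : i ≤ j)
    (hi : greedyDeficit b i = 0) (hj : greedyDeficit b j = 0) :
    ∑ k ∈ Ico i j, greedyTake b k = j - i := by
  have := sum_range_add_sum_Ico (greedyTake b) hij
  have := sum_greedyTake_add_greedyDeficit (b := b) i
  have := sum_greedyTake_add_greedyDeficit (b := b) j
  omega

lemma sum_le_mul_sum_greedyTake {c : ℕ} (hb : ∀ k, b k ≤ c) (m : ℕ) :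
    ∑ k ∈ range m, b k ≤ c * ∑ k ∈ range m, greedyTake b k := by
  rw [mul_sum]
  refine sum_le_sum fun k _ => ?_
  rcases Nat.eq_zero_or_pos (greedyTake b k) with h | h
  · have : b k = 0 := by unfold greedyTake at h; omega
    simp [this]
  · exact (hb k).trans (Nat.le_mul_of_pos_right c h)

lemma sum_le_add_mul_card_greedyDeficit_eq_zero {c : ℕ} (hb : ∀ k, b k ≤ c) (m : ℕ) :
    ∑ k ∈ range m, b k ≤ m + c * #{k ∈ range (m + 1) | greedyDeficit b k = 0} := by
  set S := {k ∈ range m | greedyTake b k < b k}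
  -- a block that is not taken entirely resets the deficit to zero
  have hS : #S ≤ #{k ∈ range (m + 1) | greedyDeficit b k = 0} := by
    refine card_le_card_of_injOn (· + 1) (fun k hk => ?_) (add_left_injective 1).injOn
    simp only [S, coe_filter, Set.mem_ofPred_eq, mem_range] at hk ⊢
    have := greedyDeficit_succ_add_greedyTake (b := b) k
    unfold greedyTake at hk this
    omega
  calc ∑ k ∈ range m, b k
      ≤ ∑ k ∈ range m, (greedyTake b k + if greedyTake b k < b k then c else 0) := by
        refine sum_le_sum fun k _ => ?_
        have := hb k
        have := greedyTake_le (b := b) k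
        split_ifs <;> omega
    _ = ∑ k ∈ range m, greedyTake b k + c * #S := by
        rw [sum_add_distrib, ← sum_filter, sum_const, smul_eq_mul, mul_comm]
    _ ≤ m + c * #{k ∈ range (m + 1) | greedyDeficit b k = 0} := by
        have := sum_greedyTake_add_greedyDeficit (b := b) m
        gcongr
        omega

end GreedySchedule

noncomputable def block (S : Finset ℤ) (c k : ℕ) : Finset ℤ :=
  S ∩ Ico ((k * c : ℕ) : ℤ) (((k + 1) * c : ℕ) : ℤ)

lemma block_subset (S : Finset ℤ) (c k : ℕ) : block S c k ⊆ S := inter_subset_left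

lemma card_block_le (S : Finset ℤ) (c k : ℕ) : #(block S c k) ≤ c := by
  refine (card_le_card inter_subset_right).trans ?_
  simp only [Int.card_Ico, add_mul, one_mul, Nat.cast_add]
  omega

lemma eq_of_mem_Ico_mul {c k l : ℕ} {x : ℤ}
    (hk : x ∈ Ico ((k * c : ℕ) : ℤ) (((k + 1) * c : ℕ) : ℤ))
    (hl : x ∈ Ico ((l * c : ℕ) : ℤ) (((l + 1) * c : ℕ) : ℤ)) : k = l := by
  simp only [mem_Ico] at hk hl
  by_contra hkl
  rcases Nat.lt_or_gt_of_ne hkl with h | h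
  · have : (((k + 1) * c : ℕ) : ℤ) ≤ ((l * c : ℕ) : ℤ) := by gcongr; omega
    omega
  · have : (((l + 1) * c : ℕ) : ℤ) ≤ ((k * c : ℕ) : ℤ) := by gcongr; omega
    omega

lemma card_inter_Ico_eq_sum_card_block (S : Finset ℤ) (c : ℕ) {i j : ℕ} (hij : i ≤ j) :
    #(S ∩ Ico ((i * c : ℕ) : ℤ) ((j * c : ℕ) : ℤ)) = ∑ k ∈ Ico i j, #(block S c k) := by
  induction j, hij using Nat.le_induction with
  | base => simp
  | succ j hij ih =>
    have hi : ((i * c : ℕ) : ℤ) ≤ ((j * c : ℕ) : ℤ) := by gcongr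
    have hj : ((j * c : ℕ) : ℤ) ≤ (((j + 1) * c : ℕ) : ℤ) := by gcongr; omega
    rw [sum_Ico_succ_top hij, ← ih, block, ← card_union_of_disjoint, ← inter_union_distrib_left,
      Ico_union_Ico_eq_Ico hi hj]
    exact (Ico_disjoint_Ico_consecutive _ _ _).mono inter_subset_right inter_subset_right

lemma card_le_sum_card_block_add {S : Finset ℤ} {n : ℕ} (hS : S ⊆ Icc 1 (n : ℤ)) (c m : ℕ) :
    #S ≤ ∑ k ∈ range m, #(block S c k) + (n + 1 - m * c) := by
  have hcover : S ⊆ (S ∩ Ico ((0 * c : ℕ) : ℤ) ((m * c : ℕ) : ℤ)) ∪ Icc ((m * c : ℕ) : ℤ) n := by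
    intro x hx
    have := mem_Icc.mp (hS hx)
    rcases lt_or_ge x ((m * c : ℕ) : ℤ) with h | h
    · exact mem_union_left _ (mem_inter.mpr ⟨hx, mem_Ico.mpr ⟨by simp; omega, h⟩⟩)
    · exact mem_union_right _ (mem_Icc.mpr ⟨h, this.2⟩)
  calc #S ≤ _ := card_le_card hcover
    _ ≤ _ := card_union_le _ _
    _ = _ := by
      rw [card_inter_Ico_eq_sum_card_block S c (Nat.zero_le m), ← range_eq_Ico, Int.card_Icc]
      omega

lemma exists_subset_card_inter_Ico_eq_sum (S : Finset ℤ) (c m : ℕ) {t : ℕ → ℕ}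
    (ht : ∀ k, t k ≤ #(block S c k)) :
    ∃ S' ⊆ S, ∀ i j, i ≤ j → j ≤ m →
      #(S' ∩ Ico ((i * c : ℕ) : ℤ) ((j * c : ℕ) : ℤ)) = ∑ k ∈ Ico i j, t k := by
  choose T hTS hTcard using fun k => exists_subset_card_eq (ht k)
  have hblock : ∀ k < m, block ((range m).biUnion T) c k = T k := by
    intro k hk
    ext x
    simp only [block, mem_inter, mem_biUnion, mem_range]
    constructor
    · rintro ⟨⟨l, -, hl⟩, hx⟩
      obtain rfl := eq_of_mem_Ico_mul hx (mem_inter.mp (hTS l hl)).2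
      exact hl
    · intro hx
      exact ⟨⟨k, hk, hx⟩, (mem_inter.mp (hTS k hx)).2⟩
  refine ⟨(range m).biUnion T, biUnion_subset.mpr fun k _ => (hTS k).trans (block_subset S c k),
    fun i j hij hjm => ?_⟩
  rw [card_inter_Ico_eq_sum_card_block _ c hij]
  refine sum_congr rfl fun k hk => ?_
  rw [hblock k (by rw [mem_Ico] at hk; omega), hTcard]

theorem exists_subset_balanced_on_many_blocks {A : Finset ℤ} {c n : ℕ} (hc : 0 < c)
    (hcn : c ≤ n) (hA : A ⊆ Icc 1 (n : ℤ)) :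
    ∃ A' ⊆ A, ∃ G ⊆ range (n / c), #A ≤ c * #A' + c ∧ #A ≤ n / c + c * #G + 2 * c ∧
      ∀ i ∈ G, ∀ j ∈ G, i ≤ j → #(A' ∩ Ico ((i * c : ℕ) : ℤ) ((j * c : ℕ) : ℤ)) = j - i := by
  set b := fun k => #(block A c k)
  have hb : ∀ k, b k ≤ c := card_block_le A c
  set K := n / c
  have hK : 0 < K := Nat.div_pos hcn hc
  have hnK : n < K * c + c := Nat.lt_div_mul_add hc
  obtain ⟨A', hA'A, hA'⟩ := exists_subset_card_inter_Ico_eq_sum A c K (greedyTake_le (b := b))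
  refine ⟨A', hA'A, {k ∈ range K | greedyDeficit b k = 0}, filter_subset _ _, ?_, ?_, ?_⟩
  · have htaken : ∑ k ∈ range K, greedyTake b k ≤ #A' := by
      rw [range_eq_Ico, ← hA' 0 K (Nat.zero_le K) le_rfl]
      exact card_le_card inter_subset_left
    have hcover : #A ≤ ∑ k ∈ range K, b k + (n + 1 - K * c) := card_le_sum_card_block_add hA c K
    have hblocks := sum_le_mul_sum_greedyTake hb K
    have := Nat.mul_le_mul_left c htaken
    omega
  · have hK1 : K - 1 + 1 = K := Nat.sub_add_cancel hK
    have hcover : #A ≤ ∑ k ∈ range (K - 1), b k + (n + 1 - (K - 1) * c) :=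
      card_le_sum_card_block_add hA c (K - 1)
    have hzero := sum_le_add_mul_card_greedyDeficit_eq_zero hb (K - 1)
    rw [hK1] at hzero
    have : (K - 1) * c + c = K * c := by rw [← Nat.succ_mul, Nat.succ_eq_add_one, hK1]
    omega
  · intro i hi j hj hij
    simp only [mem_filter, mem_range] at hi hj
    rw [hA' i j hij hj.1.le]
    exact sum_Ico_greedyTake_of_greedyDeficit_eq_zero hij hi.2 hj.2

lemma sq_card_div_four_le_card_product_filter_lt {α : Type*} [LinearOrder α] {s : Finset α}
    (hs : 2 ≤ #s) : (#s : ℝ) ^ 2 / 4 ≤ #{x ∈ s ×ˢ s | x.1 < x.2} := by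
  rw [card_product_filter_lt, Nat.cast_choose_two]
  have : (2 : ℝ) ≤ #s := by exact_mod_cast hs
  nlinarith

/-- **Equidistribution on pairs of intervals.** For every `δ > 0` there are
`c₁, c₃ > 0` and positive integers `c₂, N` such that: if `n > N` and
`A ⊆ [1,n]` with `|A| ≥ δn`, then there is `A' ⊆ A` with `|A'| ≥ c₁|A|` such
that for at least `c₃|A|²` pairs of integers `0 ≤ i < j < n/c₂` one has
`|A' ∩ [i·c₂, j·c₂)| = j - i`. -/
theorem good_spacing_pairs :
    ∀ δ : ℝ, 0 < δ → ∃ (c₁ c₃ : ℝ) (c₂ N : ℕ), 0 < c₁ ∧ 0 < c₃ ∧ 0 < c₂ ∧ 0 < N ∧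
      ∀ n : ℕ, N < n → ∀ A : Finset ℤ, A ⊆ Finset.Icc 1 (n : ℤ) →
        δ * (n : ℝ) ≤ (A.card : ℝ) →
        ∃ A' ⊆ A, c₁ * (A.card : ℝ) ≤ (A'.card : ℝ) ∧
          c₃ * (A.card : ℝ) ^ 2 ≤
            ((((Finset.range (n + 1)) ×ˢ (Finset.range (n + 1))).filter
              (fun p : ℕ × ℕ => p.1 < p.2 ∧ (p.2 : ℝ) < (n : ℝ) / (c₂ : ℝ) ∧
                (A' ∩ Finset.Ico ((p.1 * c₂ : ℕ) : ℤ) ((p.2 * c₂ : ℕ) : ℤ)).card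
                  = p.2 - p.1)).card : ℝ) := by
  intro δ hδ
  obtain ⟨c, hc, hcδ⟩ : ∃ c : ℕ, 0 < c ∧ 4 / δ ≤ c :=
    ⟨⌈4 / δ⌉₊, Nat.ceil_pos.mpr (by positivity), Nat.le_ceil _⟩
  refine ⟨1 / (2 * c), δ ^ 2 / (16 * c ^ 2), c, ⌈8 * c / δ⌉₊ + c, by positivity, by positivity,
    hc, by omega, fun n hn A hA hAδ => ?_⟩
  have hcn : 8 * (c : ℝ) < δ * n := by
    have := (div_lt_iff₀ hδ).mp (Nat.lt_of_ceil_lt (by omega) : 8 * c / δ < n)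
    linarith
  obtain ⟨A', hA'A, G, hG, hAA', hAG, hbal⟩ :=
    exists_subset_balanced_on_many_blocks hc (by omega) hA
  have hK : ((n / c : ℕ) : ℝ) ≤ n / c := Nat.cast_div_le
  have hKδ : ((n / c : ℕ) : ℝ) ≤ δ * n / 4 := by
    refine hK.trans ((div_le_div_iff₀ (by positivity) (by norm_num)).mpr ?_)
    nlinarith [(div_le_iff₀ hδ).mp hcδ]
  have hAn : (#A : ℝ) ≤ n := by exact_mod_cast (card_le_card hA).trans (by simp)
  refine ⟨A', hA'A, ?_, le_trans ?_ (Nat.cast_le.mpr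
    (card_le_card (s := {p ∈ G ×ˢ G | p.1 < p.2}) ?_))⟩
  · have : (#A : ℝ) ≤ c * #A' + c := by exact_mod_cast hAA'
    rw [div_mul_eq_mul_div, div_le_iff₀ (by positivity)]
    linarith
  · have : (#A : ℝ) ≤ (n / c : ℕ) + c * #G + 2 * c := by exact_mod_cast hAG
    have hnG : δ * n ≤ 2 * c * #G := by linarith
    have hG2 : (2 : ℝ) ≤ #G := by nlinarith
    refine le_trans ?_ (sq_card_div_four_le_card_product_filter_lt (by exact_mod_cast hG2))
    rw [div_mul_eq_mul_div, div_le_div_iff₀ (by positivity) (by norm_num)]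
    have : δ * #A ≤ 2 * c * #G := by nlinarith
    nlinarith [pow_le_pow_left₀ (by positivity) this 2]
  · rintro ⟨i, j⟩
    simp only [mem_filter, mem_product]
    rintro ⟨⟨hi, hj⟩, hij⟩
    have hjK := mem_range.mp (hG hj)
    have hKn := Nat.div_le_self n c
    refine ⟨⟨mem_range.mpr (by omega), mem_range.mpr (by omega)⟩, hij, ?_, hbal i hi j hj hij.le⟩
    exact (Nat.cast_lt.mpr hjK).trans_le hK
end

section
/- For every real δ > 0 there exist constants c₁ > 0, c₃ > 0, a positive integer c₂, and a positive integer N such that the following holds. If n > N and A ⊆ [1, n] ∩ ℤ with |A| ≥ δn, then there exists a subset A' ⊆ A with |A'| ≥ c₁·|A| such that for at least c₃·|A| integers i with 0 ≤ i < n/c₂ one has |A' ∩ [0, i·c₂)| = i. -/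
namespace GSaux

noncomputable section
open Finset

/-- prefix count -/
def fc (A : Finset ℤ) (c i : ℕ) : ℕ := (A ∩ Finset.Ico (0 : ℤ) ((i * c : ℕ) : ℤ)).card

def sc (A : Finset ℤ) (c i : ℕ) : ℤ := (fc A c i : ℤ) - i

def Mc (A : Finset ℤ) (c : ℕ) : ℕ → ℤ
  | 0 => 0
  | (i+1) => max (Mc A c i) (sc A c (i+1))

variable {A : Finset ℤ} {c : ℕ}

lemma split_card (A : Finset ℤ) {a b : ℤ} (h0 : (0:ℤ) ≤ a) (hab : a ≤ b) :
    (A ∩ Finset.Ico (0:ℤ) b).card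
      = (A ∩ Finset.Ico (0:ℤ) a).card + (A ∩ Finset.Ico a b).card := by
  rw [← Finset.Ico_union_Ico_eq_Ico h0 hab, Finset.inter_union_distrib_left,
    Finset.card_union_of_disjoint]
  exact (Finset.Ico_disjoint_Ico_consecutive 0 a b).mono
    Finset.inter_subset_right Finset.inter_subset_right

lemma fc_zero (A : Finset ℤ) (c : ℕ) : fc A c 0 = 0 := by simp [fc]

lemma sc_zero (A : Finset ℤ) (c : ℕ) : sc A c 0 = 0 := by simp [sc, fc_zero]

lemma fc_succ (A : Finset ℤ) (c i : ℕ) :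
    fc A c (i+1) = fc A c i +
      (A ∩ Finset.Ico ((i * c : ℕ) : ℤ) (((i+1) * c : ℕ) : ℤ)).card := by
  unfold fc
  exact split_card A (by positivity) (by exact_mod_cast Nat.mul_le_mul_right c (Nat.le_succ i))

lemma block_le (A : Finset ℤ) (c i : ℕ) :
    (A ∩ Finset.Ico ((i * c : ℕ) : ℤ) (((i+1) * c : ℕ) : ℤ)).card ≤ c := by
  refine le_trans (Finset.card_le_card Finset.inter_subset_right) ?_
  rw [Int.card_Ico]
  have : (((i+1) * c : ℕ) : ℤ) - ((i * c : ℕ) : ℤ) = (c : ℤ) := by push_cast; ring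
  rw [this]; simp

lemma fc_mono (A : Finset ℤ) (c : ℕ) {i j : ℕ} (h : i ≤ j) : fc A c i ≤ fc A c j := by
  apply Finset.card_le_card
  exact Finset.inter_subset_inter (le_refl _) (Finset.Ico_subset_Ico (le_refl _)
    (by exact_mod_cast Nat.mul_le_mul_right c h))

lemma fc_le_card (A : Finset ℤ) (c i : ℕ) : fc A c i ≤ A.card :=
  Finset.card_le_card Finset.inter_subset_left

lemma fc_le (A : Finset ℤ) (c i : ℕ) : fc A c i ≤ i * c := by
  refine le_trans (Finset.card_le_card Finset.inter_subset_right) ?_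
  rw [Int.card_Ico]; simp

lemma Mc_mono_succ (A : Finset ℤ) (c i : ℕ) : Mc A c i ≤ Mc A c (i+1) := le_max_left _ _

lemma sc_le_Mc (A : Finset ℤ) (c : ℕ) : ∀ {j i : ℕ}, j ≤ i → sc A c j ≤ Mc A c i := by
  intro j i h
  induction i with
  | zero =>
      have hj : j = 0 := Nat.le_zero.mp h
      simp [hj, sc_zero, Mc]
  | succ t ih =>
    rcases Nat.le_succ_iff.mp h with h' | h'
    · exact le_trans (ih h') (Mc_mono_succ A c t)
    · rw [h']; exact le_max_right _ _

lemma Mc_nonneg (A : Finset ℤ) (c i : ℕ) : 0 ≤ Mc A c i := by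
  have := sc_le_Mc A c (Nat.zero_le i)
  rwa [sc_zero] at this

lemma Mc_le_fc (A : Finset ℤ) (c i : ℕ) : Mc A c i ≤ (fc A c i : ℤ) := by
  induction i with
  | zero => simp [Mc]
  | succ t ih =>
    apply max_le
    · exact le_trans ih (by exact_mod_cast fc_mono A c (Nat.le_succ t))
    · exact sub_le_self _ (by positivity)


lemma Mc_succ (A : Finset ℤ) (c i : ℕ) :
    Mc A c (i+1) = max (Mc A c i) (sc A c (i+1)) := rfl

lemma sc_succ_eq (A : Finset ℤ) (c t : ℕ) :
    sc A c (t+1) = sc A c t +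
      (((A ∩ Finset.Ico ((t * c : ℕ) : ℤ) (((t+1) * c : ℕ) : ℤ)).card : ℤ) - 1) := by
  unfold sc
  rw [fc_succ A c t]
  push_cast
  ring

lemma exists_B (A : Finset ℤ) (c : ℕ) (i : ℕ) :
    ∃ B : Finset ℤ, B ⊆ A ∩ Finset.Ico (0:ℤ) ((i * c : ℕ) : ℤ) ∧
      ∀ j ≤ i, ((B ∩ Finset.Ico (0:ℤ) ((j * c : ℕ) : ℤ)).card : ℤ) = Mc A c j := by
  induction i with
  | zero =>
    refine ⟨∅, by simp, ?_⟩
    intro j hj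
    rw [Nat.le_zero.mp hj]
    simp [Mc]
  | succ t ih =>
    obtain ⟨B, hBsub, hBcard⟩ := ih
    set blk := A ∩ Finset.Ico ((t * c : ℕ) : ℤ) (((t+1) * c : ℕ) : ℤ) with hblk
    have hcast : ((t * c : ℕ) : ℤ) ≤ (((t+1) * c : ℕ) : ℤ) := by
      exact_mod_cast Nat.mul_le_mul_right c (Nat.le_succ t)
    have h1 : Mc A c (t+1) - Mc A c t ≤ (blk.card : ℤ) := by
      rcases le_or_gt (sc A c (t+1)) (Mc A c t) with h | h
      · rw [Mc_succ, max_eq_left h]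
        simp only [sub_self]
        positivity
      · rw [Mc_succ, max_eq_right h.le]
        have h2 := sc_succ_eq A c t
        have h3 := sc_le_Mc A c (le_refl t)
        rw [← hblk] at h2
        linarith
    have hd : (Mc A c (t+1) - Mc A c t).toNat ≤ blk.card := Int.toNat_le.mpr h1
    obtain ⟨T, hTsub, hTcard⟩ := Finset.exists_subset_card_eq hd
    have hTmem : ∀ x ∈ T, x ∈ A ∧ ((t * c : ℕ) : ℤ) ≤ x ∧ x < (((t+1) * c : ℕ) : ℤ) := by
      intro x hx
      have := hTsub hx
      rw [hblk, Finset.mem_inter, Finset.mem_Ico] at this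
      exact ⟨this.1, this.2.1, this.2.2⟩
    have hBmem : ∀ x ∈ B, x ∈ A ∧ (0:ℤ) ≤ x ∧ x < ((t * c : ℕ) : ℤ) := by
      intro x hx
      have := hBsub hx
      rw [Finset.mem_inter, Finset.mem_Ico] at this
      exact ⟨this.1, this.2.1, this.2.2⟩
    have hUsub : B ∪ T ⊆ A ∩ Finset.Ico (0:ℤ) (((t+1) * c : ℕ) : ℤ) := by
      intro x hx
      rcases Finset.mem_union.mp hx with hx | hx
      · obtain ⟨h1, h2, h3⟩ := hBmem x hx
        rw [Finset.mem_inter, Finset.mem_Ico]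
        exact ⟨h1, h2, lt_of_lt_of_le h3 hcast⟩
      · obtain ⟨h1, h2, h3⟩ := hTmem x hx
        rw [Finset.mem_inter, Finset.mem_Ico]
        refine ⟨h1, le_trans (by positivity) h2, h3⟩
    have hdisj : Disjoint B T := by
      rw [Finset.disjoint_left]
      intro x hxB hxT
      exact absurd ((hTmem x hxT).2.1) (not_le.mpr (hBmem x hxB).2.2)
    refine ⟨B ∪ T, hUsub, ?_⟩
    intro j hj
    rcases Nat.lt_succ_iff_lt_or_eq.mp (Nat.lt_succ_of_le hj) with hj' | hj'
    · have hjt : j ≤ t := Nat.lt_succ_iff.mp hj'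
      have hTempty : T ∩ Finset.Ico (0:ℤ) ((j * c : ℕ) : ℤ) = ∅ := by
        rw [Finset.eq_empty_iff_forall_notMem]
        intro x hx
        rw [Finset.mem_inter, Finset.mem_Ico] at hx
        have hge := (hTmem x hx.1).2.1
        have : ((j * c : ℕ) : ℤ) ≤ ((t * c : ℕ) : ℤ) := by
          exact_mod_cast Nat.mul_le_mul_right c hjt
        exact absurd hx.2.2 (not_lt.mpr (le_trans this hge))
      rw [Finset.union_inter_distrib_right, hTempty, Finset.union_empty]
      exact hBcard j hjt
    · subst hj'
      have hUeq : (B ∪ T) ∩ Finset.Ico (0:ℤ) (((t+1) * c : ℕ) : ℤ) = B ∪ T :=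
        Finset.inter_eq_left.mpr (hUsub.trans Finset.inter_subset_right)
      have hBeq : B ∩ Finset.Ico (0:ℤ) ((t * c : ℕ) : ℤ) = B :=
        Finset.inter_eq_left.mpr (hBsub.trans Finset.inter_subset_right)
      have hB' : ((B.card : ℤ)) = Mc A c t := by
        have := hBcard t (le_refl t)
        rwa [hBeq] at this
      have hT' : ((T.card : ℤ)) = Mc A c (t+1) - Mc A c t := by
        rw [hTcard]
        exact Int.toNat_of_nonneg (sub_nonneg.mpr (Mc_mono_succ A c t))
      rw [hUeq, Finset.card_union_of_disjoint hdisj]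
      push_cast
      rw [hB', hT']
      ring

lemma records (A : Finset ℤ) (c : ℕ) (hc : 1 ≤ c) (t : ℕ) :
    Mc A c t + ((c:ℤ) - 1) ≤ ((c:ℤ) - 1) *
      (((Finset.range (t+1)).filter (fun i => Mc A c i = sc A c i)).card : ℤ) := by
  have hc1 : (0:ℤ) ≤ (c:ℤ) - 1 := by
    have : (1:ℤ) ≤ (c:ℤ) := by exact_mod_cast hc
    linarith
  induction t with
  | zero =>
    have : ((Finset.range 1).filter (fun i => Mc A c i = sc A c i)) = {0} := by
      rw [Finset.range_one, Finset.filter_singleton, if_pos]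
      show Mc A c 0 = sc A c 0
      rw [sc_zero]; rfl
    rw [this]
    simp [Mc]
  | succ t ih =>
    have hmono : (((Finset.range (t+1)).filter (fun i => Mc A c i = sc A c i)).card : ℤ)
        ≤ (((Finset.range (t+2)).filter (fun i => Mc A c i = sc A c i)).card : ℤ) := by
      exact_mod_cast Finset.card_le_card (Finset.filter_subset_filter _
        (Finset.range_subset_range.mpr (Nat.le_succ _)))
    rcases le_or_gt (sc A c (t+1)) (Mc A c t) with h | h
    · rw [Mc_succ, max_eq_left h]
      refine le_trans ih ?_
      exact mul_le_mul_of_nonneg_left hmono hc1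
    · have hM : Mc A c (t+1) = sc A c (t+1) := by rw [Mc_succ, max_eq_right h.le]
      have hins : (Finset.range (t+2)).filter (fun i => Mc A c i = sc A c i)
          = insert (t+1) ((Finset.range (t+1)).filter (fun i => Mc A c i = sc A c i)) := by
        rw [Finset.range_add_one, Finset.filter_insert, if_pos hM]
      have hnot : (t+1) ∉ (Finset.range (t+1)).filter (fun i => Mc A c i = sc A c i) := by
        intro hx
        exact absurd (Finset.mem_range.mp (Finset.mem_filter.mp hx).1) (lt_irrefl _)
      rw [hins, Finset.card_insert_of_notMem hnot]
      have hstep : sc A c (t+1) ≤ Mc A c t + ((c:ℤ) - 1) := by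
        have h2 := sc_succ_eq A c t
        have h3 := sc_le_Mc A c (le_refl t)
        have h4 : ((A ∩ Finset.Ico ((t * c : ℕ) : ℤ) (((t+1) * c : ℕ) : ℤ)).card : ℤ) ≤ c := by
          exact_mod_cast block_le A c t
        linarith
      rw [hM]
      push_cast
      linarith

lemma sc_bound (A : Finset ℤ) (c : ℕ) (hc : 1 ≤ c) (j : ℕ) :
    ((sc A c j : ℤ) : ℝ) ≤ (A.card : ℝ) * ((c:ℝ) - 1) / c := by
  have hc0 : (0:ℝ) < (c:ℝ) := by exact_mod_cast hc
  have hc1 : (0:ℝ) ≤ (c:ℝ) - 1 := by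
    have : (1:ℝ) ≤ (c:ℝ) := by exact_mod_cast hc
    linarith
  have hsc : ((sc A c j : ℤ) : ℝ) = (fc A c j : ℝ) - j := by
    unfold sc; push_cast; ring
  rcases le_or_gt ((j:ℝ)) ((A.card:ℝ)/c) with h | h
  · have h1 : (fc A c j : ℝ) ≤ (j:ℝ) * c := by exact_mod_cast fc_le A c j
    rw [hsc]
    have : (fc A c j : ℝ) - j ≤ (j:ℝ) * ((c:ℝ) - 1) := by linarith [h1]
    refine le_trans this ?_
    calc (j:ℝ) * ((c:ℝ) - 1) ≤ ((A.card:ℝ)/c) * ((c:ℝ) - 1) := by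
          exact mul_le_mul_of_nonneg_right h hc1
      _ = (A.card : ℝ) * ((c:ℝ) - 1) / c := by ring
  · have h1 : (fc A c j : ℝ) ≤ (A.card : ℝ) := by exact_mod_cast fc_le_card A c j
    rw [hsc]
    have h2 : (A.card : ℝ) - j < (A.card : ℝ) - (A.card:ℝ)/c := by linarith
    have h3 : (A.card : ℝ) - (A.card:ℝ)/c = (A.card : ℝ) * ((c:ℝ) - 1) / c := by
      field_simp
    linarith

lemma Mc_bound (A : Finset ℤ) (c : ℕ) (hc : 1 ≤ c) (t : ℕ) :
    ((Mc A c t : ℤ) : ℝ) ≤ (A.card : ℝ) * ((c:ℝ) - 1) / c := by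
  induction t with
  | zero =>
    show ((0:ℤ):ℝ) ≤ _
    have hc0 : (0:ℝ) < (c:ℝ) := by exact_mod_cast hc
    have hc1 : (0:ℝ) ≤ (c:ℝ) - 1 := by
      have : (1:ℝ) ≤ (c:ℝ) := by exact_mod_cast hc
      linarith
    rw [Int.cast_zero]
    positivity
  | succ t ih =>
    rw [Mc_succ]
    rcases max_cases (Mc A c t) (sc A c (t+1)) with ⟨he, _⟩ | ⟨he, _⟩ <;> rw [he]
    · exact ih
    · exact sc_bound A c hc (t+1)

end
end GSaux


set_option maxHeartbeats 1000000 in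

/-- **Equidistribution on initial intervals.** For every `δ > 0` there are
`c₁, c₃ > 0` and positive integers `c₂, N` such that: if `n > N` and
`A ⊆ [1,n]` with `|A| ≥ δn`, then there is `A' ⊆ A` with `|A'| ≥ c₁|A|` such
that for at least `c₃|A|` integers `0 ≤ i < n/c₂` one has
`|A' ∩ [0, i·c₂)| = i`. -/
theorem good_spacing_initial :
    ∀ δ : ℝ, 0 < δ → ∃ (c₁ c₃ : ℝ) (c₂ N : ℕ), 0 < c₁ ∧ 0 < c₃ ∧ 0 < c₂ ∧ 0 < N ∧
      ∀ n : ℕ, N < n → ∀ A : Finset ℤ, A ⊆ Finset.Icc 1 (n : ℤ) →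
        δ * (n : ℝ) ≤ (A.card : ℝ) →
        ∃ A' ⊆ A, c₁ * (A.card : ℝ) ≤ (A'.card : ℝ) ∧
          c₃ * (A.card : ℝ) ≤
            (((Finset.range (n + 1)).filter
              (fun i : ℕ => (i : ℝ) < (n : ℝ) / (c₂ : ℝ) ∧
                (A' ∩ Finset.Ico (0 : ℤ) ((i * c₂ : ℕ) : ℤ)).card = i)).card : ℝ) := by
  intro δ hδ
  set δ' : ℝ := min δ 1 with hδ'def
  have hδ'0 : 0 < δ' := lt_min hδ one_pos
  have hδ'le : δ' ≤ δ := min_le_left _ _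
  set c : ℕ := ⌈2/δ'⌉₊ + 2 with hcdef
  have hc2 : 2 ≤ c := by omega
  have hc1 : 1 ≤ c := by omega
  have hc0' : 0 < c := by omega
  have hc0R : (0:ℝ) < (c:ℝ) := by exact_mod_cast hc0'
  have hc2R : (2:ℝ) ≤ (c:ℝ) := by exact_mod_cast hc2
  have hcge : 2/δ' ≤ (c:ℝ) := by
    refine le_trans (Nat.le_ceil _) ?_
    have h : (⌈2/δ'⌉₊:ℕ) ≤ c := by omega
    exact_mod_cast h
  set N : ℕ := ⌈8*((c:ℝ)+1)/δ'⌉₊ + 1 with hNdef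
  have hNreal : 8*((c:ℝ)+1)/δ' ≤ (N:ℝ) := by
    refine le_trans (Nat.le_ceil _) ?_
    have h : (⌈8*((c:ℝ)+1)/δ'⌉₊:ℕ) ≤ N := by omega
    exact_mod_cast h
  refine ⟨1/(c:ℝ), 1/(4*(c:ℝ)), c, N, by positivity, by positivity, hc0', by omega, ?_⟩
  intro n hn A hA hcard
  have hn1 : 1 ≤ n := by omega
  have hk1 : δ' * (n:ℝ) ≤ (A.card : ℝ) :=
    le_trans (mul_le_mul_of_nonneg_right hδ'le (Nat.cast_nonneg n)) hcard
  have hkn : A.card ≤ n := by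
    have h1 := Finset.card_le_card hA
    have h2 : (Finset.Icc (1:ℤ) (n:ℤ)).card = n := by
      rw [Int.card_Icc]
      simp
    omega
  have hkbig : 8*((c:ℝ)+1) ≤ (A.card:ℝ) := by
    have hnN : (N:ℝ) ≤ (n:ℝ) := by exact_mod_cast le_of_lt hn
    have heq : 8*((c:ℝ)+1) = δ' * (8*((c:ℝ)+1)/δ') := by field_simp
    calc 8*((c:ℝ)+1) = δ' * (8*((c:ℝ)+1)/δ') := heq
      _ ≤ δ' * N := mul_le_mul_of_nonneg_left hNreal hδ'0.le
      _ ≤ δ' * n := mul_le_mul_of_nonneg_left hnN hδ'0.le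
      _ ≤ (A.card:ℝ) := hk1
  set T : ℕ := (n-1)/c with hTdef
  have hTc1 : T * c ≤ n - 1 := Nat.div_mul_le_self _ _
  have hTc2 : n ≤ T * c + c := by
    have h := (Nat.div_lt_iff_lt_mul hc0').mp (Nat.lt_succ_self T)
    rw [Nat.succ_mul] at h
    obtain ⟨m, hm⟩ : ∃ m, m = T*c := ⟨_, rfl⟩
    rw [← hm] at h ⊢
    omega
  have hTn : T ≤ n := le_trans (Nat.div_le_self _ _) (Nat.sub_le n 1)
  obtain ⟨B, hBsub, hBcard⟩ := GSaux.exists_B A c T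
  have hBA : B ⊆ A := hBsub.trans Finset.inter_subset_left
  -- basic card facts
  have hBeq : B ∩ Finset.Ico (0:ℤ) ((T*c:ℕ):ℤ) = B :=
    Finset.inter_eq_left.mpr (hBsub.trans Finset.inter_subset_right)
  have hBfull : (B.card:ℤ) = GSaux.Mc A c T := by
    have h := hBcard T (le_refl T)
    rwa [hBeq] at h
  have hAcount : ∀ j, j ≤ T → (((A\B) ∩ Finset.Ico (0:ℤ) ((j*c:ℕ):ℤ)).card : ℤ)
      = (GSaux.fc A c j : ℤ) - GSaux.Mc A c j := by
    intro j hj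
    have hBj := hBcard j hj
    have hsub : B ∩ Finset.Ico (0:ℤ) ((j*c:ℕ):ℤ) ⊆ A ∩ Finset.Ico (0:ℤ) ((j*c:ℕ):ℤ) :=
      Finset.inter_subset_inter hBA (Finset.Subset.refl _)
    have hset : (A\B) ∩ Finset.Ico (0:ℤ) ((j*c:ℕ):ℤ)
        = (A ∩ Finset.Ico (0:ℤ) ((j*c:ℕ):ℤ)) \ (B ∩ Finset.Ico (0:ℤ) ((j*c:ℕ):ℤ)) := by
      ext x
      simp only [Finset.mem_sdiff, Finset.mem_inter]
      tauto
    rw [hset, Finset.card_sdiff_of_subset hsub, Nat.cast_sub (Finset.card_le_card hsub), hBj]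
    rfl
  refine ⟨A \ B, Finset.sdiff_subset, ?_, ?_⟩
  · -- size of A'
    have hMb := GSaux.Mc_bound A c hc1 T
    have hBk : B.card ≤ A.card := Finset.card_le_card hBA
    have hcardAB : ((A\B).card : ℝ) = (A.card:ℝ) - ((GSaux.Mc A c T : ℤ):ℝ) := by
      rw [Finset.card_sdiff_of_subset hBA, Nat.cast_sub hBk]
      have : ((B.card:ℕ):ℝ) = ((GSaux.Mc A c T : ℤ):ℝ) := by exact_mod_cast hBfull
      rw [this]
    have hkey : (A.card:ℝ) - (A.card:ℝ)*((c:ℝ)-1)/(c:ℝ) = (A.card:ℝ)/(c:ℝ) := by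
      field_simp
      ring
    have : 1/(c:ℝ) * (A.card:ℝ) = (A.card:ℝ)/(c:ℝ) := by ring
    rw [this, hcardAB]
    linarith
  · -- number of good indices
    classical
    set G := (Finset.range (T+1)).filter (fun i => GSaux.Mc A c i = GSaux.sc A c i) with hG
    have hGsub : G ⊆ (Finset.range (n+1)).filter
        (fun i : ℕ => (i : ℝ) < (n : ℝ) / (c : ℝ) ∧
          ((A\B) ∩ Finset.Ico (0 : ℤ) ((i * c : ℕ) : ℤ)).card = i) := by
      intro i hi
      rw [hG, Finset.mem_filter, Finset.mem_range] at hi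
      obtain ⟨hir, hieq⟩ := hi
      have hiT : i ≤ T := Nat.lt_succ_iff.mp hir
      refine Finset.mem_filter.mpr ⟨Finset.mem_range.mpr (by omega), ?_, ?_⟩
      · have h1 : i * c ≤ T * c := Nat.mul_le_mul_right c hiT
        have h2 : i * c < n := by
          have h3 : i * c ≤ n - 1 := le_trans h1 hTc1
          omega
        rw [lt_div_iff₀ hc0R]
        exact_mod_cast h2
      · have h1 := hAcount i hiT
        have h2 : (GSaux.fc A c i : ℤ) - GSaux.Mc A c i = (i:ℤ) := by
          rw [hieq]
          unfold GSaux.sc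
          ring
        have h3 : (((A\B) ∩ Finset.Ico (0:ℤ) ((i*c:ℕ):ℤ)).card : ℤ) = (i:ℤ) := by
          rw [h1, h2]
        exact_mod_cast h3
    -- lower bound on Mc at T
    have hab : ((T*c:ℕ):ℤ) ≤ (n:ℤ)+1 := by
      have h : (T*c:ℕ) ≤ n := le_trans hTc1 (Nat.sub_le n 1)
      have h2 : ((T*c:ℕ):ℤ) ≤ (n:ℤ) := by exact_mod_cast h
      linarith
    have hsplit := GSaux.split_card A (a := ((T*c:ℕ):ℤ)) (b := (n:ℤ)+1) (by positivity) hab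
    have hAeq : A ∩ Finset.Ico (0:ℤ) ((n:ℤ)+1) = A := by
      refine Finset.inter_eq_left.mpr ?_
      intro x hx
      have h := hA hx
      rw [Finset.mem_Icc] at h
      rw [Finset.mem_Ico]
      omega
    rw [hAeq] at hsplit
    have htail : (A ∩ Finset.Ico ((T*c:ℕ):ℤ) ((n:ℤ)+1)).card ≤ c + 1 := by
      refine le_trans (Finset.card_le_card Finset.inter_subset_right) ?_
      rw [Int.card_Ico]
      refine Int.toNat_le.mpr ?_
      have h := hTc2
      have h' : (n:ℤ) ≤ (T:ℤ)*(c:ℤ) + (c:ℤ) := by exact_mod_cast h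
      push_cast
      linarith
    have hkfc : (A.card:ℤ) ≤ (GSaux.fc A c T : ℤ) + ((c:ℤ)+1) := by
      have h1 : A.card ≤ GSaux.fc A c T + (c+1) := by
        rw [hsplit]
        exact Nat.add_le_add_left htail _
      exact_mod_cast h1
    have hMlb : (A.card : ℤ) - ((c:ℤ)+1) - (T:ℤ) ≤ GSaux.Mc A c T := by
      have h1 : GSaux.sc A c T ≤ GSaux.Mc A c T := GSaux.sc_le_Mc A c (le_refl T)
      unfold GSaux.sc at h1
      linarith
    -- real bounds
    have hTreal : (T:ℝ) ≤ (n:ℝ)/(c:ℝ) := by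
      rw [le_div_iff₀ hc0R]
      have h : T*c ≤ n := le_trans hTc1 (Nat.sub_le n 1)
      exact_mod_cast h
    have hdivnc : (n:ℝ)/(c:ℝ) ≤ (A.card:ℝ)/2 := by
      have h1 : (n:ℝ)/(c:ℝ) ≤ (n:ℝ)/(2/δ') := by
        refine div_le_div_of_nonneg_left (Nat.cast_nonneg n) (by positivity) hcge
      have h2 : (n:ℝ)/(2/δ') = (n:ℝ)*δ'/2 := by
        rw [div_div_eq_mul_div]
      have h3 : (n:ℝ)*δ'/2 ≤ (A.card:ℝ)/2 := by
        have : (n:ℝ)*δ' = δ'*(n:ℝ) := by ring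
        rw [this]
        linarith
      linarith
    have hc1R : (c:ℝ)+1 ≤ (A.card:ℝ)/8 := by linarith
    have hMR : (A.card:ℝ)*3/8 ≤ ((GSaux.Mc A c T : ℤ):ℝ) := by
      have h1 : (A.card:ℝ) - ((c:ℝ)+1) - (T:ℝ) ≤ ((GSaux.Mc A c T : ℤ):ℝ) := by
        exact_mod_cast hMlb
      linarith
    have hrec := GSaux.records A c hc1 T
    have hrecR : ((GSaux.Mc A c T : ℤ):ℝ) + ((c:ℝ)-1) ≤ ((c:ℝ)-1) * (G.card : ℝ) := by
      rw [hG]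
      exact_mod_cast hrec
    have hG0 : (0:ℝ) ≤ (G.card:ℝ) := Nat.cast_nonneg _
    have hk0 : (0:ℝ) ≤ (A.card:ℝ) := Nat.cast_nonneg _
    have hFG : (G.card : ℝ) ≤ (((Finset.range (n+1)).filter
        (fun i : ℕ => (i : ℝ) < (n : ℝ) / (c : ℝ) ∧
          ((A\B) ∩ Finset.Ico (0 : ℤ) ((i * c : ℕ) : ℤ)).card = i)).card : ℝ) := by
      exact_mod_cast Finset.card_le_card hGsub
    have hGlb : (A.card:ℝ)*3/8 ≤ ((c:ℝ)-1) * (G.card:ℝ) := by linarith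
    have hfin : 1/(4*(c:ℝ)) * (A.card:ℝ) ≤ (G.card:ℝ) := by
      rw [div_mul_eq_mul_div, one_mul, div_le_iff₀ (by positivity)]
      linarith [hGlb, hG0, hk0, mul_nonneg hc0R.le hG0]
    linarith
end

section
/- Let ε ∈ (0,1) and set p = 1 + ε. Then for all integers x, y with 1 ≤ x and y ≥ x + 2, one has x^p + y^p − (x+1)^p − (y−1)^p > ε·(y−x)/(2y). -/
/-!
With `G s = (s + 1)^p - s^p`, the gap `x^p + y^p - (x + 1)^p - (y - 1)^p` is `G (y - 1) - G x`.
Since `t ↦ t^ε` is concave, its tangent bound gives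
`G' s = p ((s + 1)^ε - s^ε) ≥ p ε (s + 1)^(ε - 1) ≥ p ε / y` for `0 ≤ s ≤ y - 1`,
hence `G (y - 1) - G x ≥ p ε (y - 1 - x) / y` by the mean value theorem.
This beats `ε (y - x) / (2 y)` because `2 (y - 1 - x) ≥ y - x` when `y - x ≥ 2`, and `p > 1`.
-/

open Real Set

lemma rpow_le_rpow_add_mul_rpow_sub_one_mul_sub {ε s t : ℝ} (hε0 : 0 ≤ ε) (hε1 : ε ≤ 1)
    (hs : 0 ≤ s) (ht : 0 < t) : s ^ ε ≤ t ^ ε + ε * t ^ (ε - 1) * (s - t) := by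
  have hbern : (1 + (s - t) / t) ^ ε ≤ 1 + ε * ((s - t) / t) :=
    rpow_one_add_le_one_add_mul_self (by rw [le_div_iff₀ ht]; linarith) hε0 hε1
  have hq : 1 + (s - t) / t = s / t := by field_simp; ring
  calc s ^ ε = t ^ ε * (s / t) ^ ε := by
        rw [← mul_rpow ht.le (div_nonneg hs ht.le), mul_div_cancel₀ _ ht.ne']
    _ ≤ t ^ ε * (1 + ε * ((s - t) / t)) := by rw [← hq]; gcongr
    _ = t ^ ε + ε * t ^ (ε - 1) * (s - t) := by rw [rpow_sub_one ht.ne']; field_simp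

lemma div_le_rpow_add_one_sub_rpow {ε s b : ℝ} (hε0 : 0 ≤ ε) (hε1 : ε ≤ 1) (hs : 0 ≤ s)
    (hsb : s + 1 ≤ b) : ε / b ≤ (s + 1) ^ ε - s ^ ε := by
  have htangent := rpow_le_rpow_add_mul_rpow_sub_one_mul_sub hε0 hε1 hs (by linarith : 0 < s + 1)
  have hinv : b⁻¹ ≤ (s + 1) ^ (ε - 1) :=
    calc b⁻¹ ≤ (s + 1)⁻¹ := inv_anti₀ (by linarith) hsb
      _ = (s + 1) ^ (-1 : ℝ) := (rpow_neg_one _).symm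
      _ ≤ (s + 1) ^ (ε - 1) := rpow_le_rpow_of_exponent_le (by linarith) (by linarith)
  rw [div_eq_mul_inv]
  nlinarith [mul_le_mul_of_nonneg_left hinv hε0]

lemma hasDerivAt_rpow_add_one_sub_rpow {p : ℝ} (hp : 1 ≤ p) (s : ℝ) :
    HasDerivAt (fun s => (s + 1) ^ p - s ^ p) (p * ((s + 1) ^ (p - 1) - s ^ (p - 1))) s := by
  have h := (((hasDerivAt_id' s).add_const 1).rpow_const (Or.inr hp)).fun_sub
    (hasDerivAt_rpow_const (Or.inr hp))
  rwa [one_mul, ← mul_sub] at h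

lemma mul_sub_le_rpow_add_one_sub_rpow_sub {p a c b : ℝ} (hp1 : 1 ≤ p) (hp2 : p ≤ 2)
    (ha : 0 ≤ a) (hac : a ≤ c) (hcb : c + 1 ≤ b) :
    p * (p - 1) / b * (c - a) ≤ ((c + 1) ^ p - c ^ p) - ((a + 1) ^ p - a ^ p) := by
  have hG : Differentiable ℝ (fun s : ℝ => (s + 1) ^ p - s ^ p) := fun s =>
    (hasDerivAt_rpow_add_one_sub_rpow hp1 s).differentiableAt
  refine (convex_Icc a c).mul_sub_le_image_sub_of_le_deriv hG.continuous.continuousOn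
    hG.differentiableOn (fun s hs => ?_) a (left_mem_Icc.2 hac) c
    (right_mem_Icc.2 hac) hac
  rw [interior_Icc] at hs
  rw [(hasDerivAt_rpow_add_one_sub_rpow hp1 s).deriv, mul_div_assoc]
  exact mul_le_mul_of_nonneg_left
    (div_le_rpow_add_one_sub_rpow (by linarith) (by linarith) (by linarith [hs.1])
      (by linarith [hs.2])) (by linarith)

/-- For `p = 1 + ε` with `ε ∈ (0,1)` and integers `1 ≤ x`, `y ≥ x + 2`, one has
`x^p + y^p - (x+1)^p - (y-1)^p > ε (y-x) / (2y)`. -/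
theorem power_gap_bound (ε : ℝ) (hε : ε ∈ Set.Ioo (0 : ℝ) 1) (p : ℝ) (hp : p = 1 + ε)
    (x y : ℤ) (hx : 1 ≤ x) (hy : x + 2 ≤ y) :
    ε * ((y : ℝ) - (x : ℝ)) / (2 * (y : ℝ)) <
      (x : ℝ) ^ p + (y : ℝ) ^ p - ((x : ℝ) + 1) ^ p - ((y : ℝ) - 1) ^ p := by
  obtain ⟨hε0, hε1⟩ := hε
  have hx' : (1 : ℝ) ≤ x := by exact_mod_cast hx
  have hy' : (x : ℝ) + 2 ≤ y := by exact_mod_cast hy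
  have hy0 : (0 : ℝ) < y := by linarith
  have hgap := mul_sub_le_rpow_add_one_sub_rpow_sub (by linarith : 1 ≤ p) (by linarith)
    (by linarith : (0 : ℝ) ≤ x) (by linarith : (x : ℝ) ≤ y - 1) (sub_add_cancel _ _).le
  rw [sub_add_cancel] at hgap
  calc ε * ((y : ℝ) - x) / (2 * y) = ε / (2 * y) * (y - x) := by ring
    _ < ε / (2 * y) * (2 * p * (y - 1 - x)) := by
        gcongr
        nlinarith
    _ = p * (p - 1) / y * (y - 1 - x) := by rw [hp]; field_simp; ring
    _ ≤ _ := by linarith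
end

section
/- Let ε ∈ (0,1) and set p = 1 + ε. Let x, y, z, w be integers with 1 ≤ x < z ≤ w < y, x + y = z + w, and ⌊x^p⌋ + ⌊y^p⌋ = ⌊z^p⌋ + ⌊w^p⌋. Then z − x < 4y/(ε·(y−x)). -/
/-!
Put `d = z - x = y - w`. The floor condition forces the second difference
`(y^p - w^p) - (z^p - x^p)` to be less than `2`. By the mean value theorem for
`t ↦ (t + d)^p - t^p` on `[x, w]`, together with the tangent-line bound for the concave
`t ↦ t^ε`, this second difference is at least `p ε d y^(ε-1) (w - x) ≥ ε d (w - x) / y`.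
Finally `d ≤ w - x` gives `y - x ≤ 2 (w - x)`.
-/

open Real Set

namespace Real

theorem mul_rpow_sub_one_le_rpow_sub_rpow {s a b : ℝ} (hs0 : 0 ≤ s) (hs1 : s ≤ 1)
    (ha : 0 ≤ a) (hb : 0 < b) : s * (b - a) * b ^ (s - 1) ≤ b ^ s - a ^ s := by
  have hamgm : a ^ s * b ^ (1 - s) ≤ s * a + (1 - s) * b :=
    geom_mean_le_arith_mean2_weighted hs0 (by linarith) ha hb.le (by ring)
  have hcancel : b ^ (1 - s) * b ^ (s - 1) = 1 := by
    rw [← rpow_add hb]; norm_num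
  have hbs : b * b ^ (s - 1) = b ^ s := by
    rw [rpow_sub_one hb.ne', mul_div_cancel₀ _ hb.ne']
  have := mul_le_mul_of_nonneg_right hamgm (rpow_nonneg hb.le (s - 1))
  rw [mul_assoc, hcancel] at this
  nlinarith

theorem le_rpow_one_add_second_difference {ε a b d : ℝ} (hε0 : 0 ≤ ε) (hε1 : ε ≤ 1)
    (ha : 0 ≤ a) (hab : a ≤ b) (hd : 0 < d) :
    (1 + ε) * ε * d * (b + d) ^ (ε - 1) * (b - a) ≤
      ((b + d) ^ (1 + ε) - b ^ (1 + ε)) - ((a + d) ^ (1 + ε) - a ^ (1 + ε)) := by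
  set g : ℝ → ℝ := fun t ↦ (t + d) ^ (1 + ε) - t ^ (1 + ε)
  have hp : 1 ≤ 1 + ε := by linarith
  have hg : ∀ t, HasDerivAt g ((1 + ε) * ((t + d) ^ ε - t ^ ε)) t := fun t ↦ by
    have h := (hasDerivAt_rpow_const (x := t + d) (Or.inr hp)).comp_add_const.sub
      (hasDerivAt_rpow_const (x := t) (Or.inr hp))
    rwa [add_sub_cancel_left, ← mul_sub] at h
  have hderiv : ∀ t ∈ interior (Icc a b), (1 + ε) * (ε * d * (b + d) ^ (ε - 1)) ≤ deriv g t := by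
    rw [interior_Icc]
    rintro t ⟨hat, htb⟩
    rw [(hg t).deriv]
    have hmono : (b + d) ^ (ε - 1) ≤ (t + d) ^ (ε - 1) :=
      rpow_le_rpow_of_nonpos (by linarith) (by linarith) (by linarith)
    gcongr
    calc ε * d * (b + d) ^ (ε - 1) ≤ ε * (t + d - t) * (t + d) ^ (ε - 1) := by
          rw [add_sub_cancel_left]
          gcongr
      _ ≤ (t + d) ^ ε - t ^ ε :=
          mul_rpow_sub_one_le_rpow_sub_rpow hε0 hε1 (by linarith) (by linarith)
  have hdiff : Differentiable ℝ g := fun t ↦ (hg t).differentiableAt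
  have := (convex_Icc a b).mul_sub_le_image_sub_of_le_deriv hdiff.continuous.continuousOn
    hdiff.differentiableOn hderiv a (left_mem_Icc.2 hab) b (right_mem_Icc.2 hab) hab
  linarith

end Real

theorem lt_add_add_two_of_floor_add_floor_eq {α : Type*} [CommRing α] [LinearOrder α]
    [IsStrictOrderedRing α] [FloorRing α] {a b c e : α} (h : ⌊a⌋ + ⌊b⌋ = ⌊c⌋ + ⌊e⌋) :
    a + b < c + e + 2 := by
  have hcast : (⌊a⌋ : α) + ⌊b⌋ = ⌊c⌋ + ⌊e⌋ := by exact_mod_cast h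
  linarith [Int.lt_floor_add_one a, Int.lt_floor_add_one b, Int.floor_le c, Int.floor_le e]

theorem floor_power_quadruple_bound_general (ε : ℝ) (hε : ε ∈ Set.Ioo (0 : ℝ) 1)
    (p : ℝ) (hp : p = 1 + ε) (x y z w : ℤ)
    (hx : 1 ≤ x) (hxz : x < z) (hzw : z ≤ w)
    (hsum : x + y = z + w)
    (hfloor : ⌊(x : ℝ) ^ p⌋ + ⌊(y : ℝ) ^ p⌋ = ⌊(z : ℝ) ^ p⌋ + ⌊(w : ℝ) ^ p⌋) :
    (z : ℝ) - (x : ℝ) < 4 * (y : ℝ) / (ε * ((y : ℝ) - (x : ℝ))) := by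
  obtain ⟨hε0, hε1⟩ := hε
  subst hp
  have hx1 : (1 : ℝ) ≤ x := by exact_mod_cast hx
  have hxw : (x : ℝ) ≤ w := by exact_mod_cast hxz.le.trans hzw
  have hzw : (z : ℝ) ≤ w := by exact_mod_cast hzw
  have hsum : (x : ℝ) + y = z + w := by exact_mod_cast hsum
  set d : ℝ := z - x with hd
  have hd0 : 0 < d := sub_pos.2 (by exact_mod_cast hxz)
  have hy : (y : ℝ) = w + d := by linarith
  have hz : (z : ℝ) = x + d := by linarith
  have hy0 : (0 : ℝ) < y := by linarith
  have hupper := lt_add_add_two_of_floor_add_floor_eq hfloor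
  have hlower := le_rpow_one_add_second_difference hε0.le hε1.le (by linarith) hxw hd0
  rw [← hy, ← hz, rpow_sub_one hy0.ne'] at hlower
  have hyε : 1 ≤ (1 + ε) * (y : ℝ) ^ ε := by
    nlinarith [one_le_rpow (by linarith : (1 : ℝ) ≤ y) hε0.le]
  have hkey : ε * d * (w - x) < 2 * y := by
    have h := hlower.trans_lt (by linarith : _ < (2 : ℝ))
    rw [show (1 + ε) * ε * d * ((y : ℝ) ^ ε / y) * (w - x)
        = ε * d * (w - x) * ((1 + ε) * (y : ℝ) ^ ε) / y by ring, div_lt_iff₀ hy0] at h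
    nlinarith [mul_nonneg (mul_nonneg hε0.le hd0.le) (sub_nonneg.2 hxw)]
  rw [lt_div_iff₀ (by nlinarith)]
  nlinarith [mul_le_mul_of_nonneg_left (by linarith : d ≤ w - x) (mul_nonneg hε0.le hd0.le)]

/-- For `p = 1 + ε` with `ε ∈ (0,1)`: if `1 ≤ x < z ≤ w < y` are integers with
`x + y = z + w` and `⌊x^p⌋ + ⌊y^p⌋ = ⌊z^p⌋ + ⌊w^p⌋`, then
`z - x < 4y / (ε (y - x))`. -/
theorem floor_power_quadruple_bound (ε : ℝ) (hε : ε ∈ Set.Ioo (0 : ℝ) 1)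
    (p : ℝ) (hp : p = 1 + ε) (x y z w : ℤ)
    (hx : 1 ≤ x) (hxz : x < z) (hzw : z ≤ w) (hwy : w < y)
    (hsum : x + y = z + w)
    (hfloor : ⌊(x : ℝ) ^ p⌋ + ⌊(y : ℝ) ^ p⌋ = ⌊(z : ℝ) ^ p⌋ + ⌊(w : ℝ) ^ p⌋) :
    (z : ℝ) - (x : ℝ) < 4 * (y : ℝ) / (ε * ((y : ℝ) - (x : ℝ))) :=
  floor_power_quadruple_bound_general ε hε p hp x y z w hx hxz hzw hsum hfloor
end

section
/- Let n and k be positive integers, let δ ∈ (0,1], and let B₁, …, B_k ⊆ [1, n] ∩ ℤ with |Bᵢ| ≥ δ·n for each i. Then there exist integers t₁, …, t_k such that |(B₁ + t₁) ∩ (B₂ + t₂) ∩ ⋯ ∩ (B_k + t_k)| ≥ (δᵏ/2^{k−1})·n. -/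
/-!
For finite sets `A`, `C` in an additive group, the pairs of `A × C` split according to their
difference `x ∈ A - C`, the fibre over `x` having `|A ∩ (x + C)|` elements; hence some translate
satisfies `|A ∩ (x + C)| ≥ |A| |C| / |A - C|`. Adding the sets `Bᵢ ⊆ S = [1, n]` one at a time to
an intersection that stays inside `S`, where `|S - S| ≤ 2n`, yields translates with
`(2n)^(k-1) |⋂ (Bᵢ + tᵢ)| ≥ ∏ |Bᵢ| ≥ (δn)^k`.
-/

open Finset
open scoped Pointwise

theorem exists_card_mul_card_le_card_sub_mul_card_inter_vadd {G : Type*} [AddGroup G]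
    [DecidableEq G] (A B : Finset G) : ∃ x : G, #A * #B ≤ #(A - B) * #(A ∩ (x +ᵥ B)) := by
  rcases (A - B).eq_empty_or_nonempty with hAB | hAB
  · obtain rfl | rfl := sub_eq_empty.mp hAB <;> exact ⟨0, by simp⟩
  have hsum : #A * #B = ∑ x ∈ A - B, #(A ∩ (x +ᵥ B)) := by
    rw [← card_product, card_eq_sum_card_fiberwise (f := fun ab => ab.1 - ab.2) (t := A - B)]
    · simp_rw [card_sub_eq, card_inter_vadd]
    · rintro ⟨a, b⟩ hab
      rw [coe_product, Set.mem_prod] at hab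
      exact sub_mem_sub hab.1 hab.2
  obtain ⟨x, -, hx⟩ := exists_le_of_sum_le hAB
    (f := fun _ => #A * #B) (g := fun x => #(A - B) * #(A ∩ (x +ᵥ B)))
    (by rw [sum_const, ← mul_sum, ← hsum, smul_eq_mul])
  exact ⟨x, hx⟩

theorem card_Icc_sub_Icc_le (n : ℕ) : #(Icc 1 (n : ℤ) - Icc 1 (n : ℤ)) ≤ 2 * n := by
  calc #(Icc 1 (n : ℤ) - Icc 1 (n : ℤ)) ≤ #(Icc (1 - (n : ℤ)) (n - 1)) := by
        refine card_le_card fun x hx => ?_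
        obtain ⟨a, ha, b, hb, rfl⟩ := mem_sub.mp hx
        rw [mem_Icc] at ha hb ⊢
        omega
    _ ≤ 2 * n := by rw [Int.card_Icc]; omega

theorem exists_vadd_prod_card_le_card_sub_pow_mul_card_iInter {G : Type*} [AddGroup G]
    [DecidableEq G] (S : Finset G) :
    ∀ (m : ℕ) (B : Fin (m + 1) → Finset G), (∀ i, B i ⊆ S) →
      ∃ (t : Fin (m + 1) → G) (D : Finset G), D ⊆ S ∧
        (D : Set G) = ⋂ i, t i +ᵥ (B i : Set G) ∧ ∏ i, #(B i) ≤ #(S - S) ^ m * #D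
  | 0, B, hB => ⟨0, B 0, hB 0, by ext; simp [Fin.forall_fin_one], by simp⟩
  | m + 1, B, hB => by
    obtain ⟨t, D, hDS, hD, hprod⟩ :=
      exists_vadd_prod_card_le_card_sub_pow_mul_card_iInter S m (fun i => B i.succ) fun i => hB _
    obtain ⟨s, hs⟩ := exists_card_mul_card_le_card_sub_mul_card_inter_vadd D (B 0)
    refine ⟨Fin.cons s t, D ∩ (s +ᵥ B 0), inter_subset_left.trans hDS, ?_, ?_⟩
    · ext x
      simp [hD, Fin.forall_fin_succ, and_comm]
    · have hsub : #(D - B 0) ≤ #(S - S) := card_le_card (sub_subset_sub hDS (hB 0))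
      calc ∏ i, #(B i) = #(B 0) * ∏ i : Fin (m + 1), #(B i.succ) := Fin.prod_univ_succ _
        _ ≤ #(B 0) * (#(S - S) ^ m * #D) := Nat.mul_le_mul_left _ hprod
        _ = #(S - S) ^ m * (#D * #(B 0)) := by ring
        _ ≤ #(S - S) ^ m * (#(S - S) * #(D ∩ (s +ᵥ B 0))) :=
          Nat.mul_le_mul_left _ (hs.trans (Nat.mul_le_mul_right _ hsub))
        _ = #(S - S) ^ (m + 1) * #(D ∩ (s +ᵥ B 0)) := by ring

/-- If `B₁, …, B_k ⊆ [1,n]` each have at least `δn` elements, then there are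
translates `B₁ + t₁, …, B_k + t_k` whose common intersection has at least
`(δᵏ / 2^{k-1}) n` elements. -/
theorem exists_translates_large_common_inter (n k : ℕ) (hn : 0 < n) (hk : 0 < k)
    (δ : ℝ) (hδ : δ ∈ Set.Ioc (0 : ℝ) 1)
    (B : Fin k → Finset ℤ) (hB : ∀ i, B i ⊆ Finset.Icc 1 (n : ℤ))
    (hBcard : ∀ i, δ * (n : ℝ) ≤ ((B i).card : ℝ)) :
    ∃ t : Fin k → ℤ,
      δ ^ k / 2 ^ (k - 1) * (n : ℝ) ≤
        ((⋂ i, (fun b => b + t i) '' ((B i : Set ℤ))).ncard : ℝ) := by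
  obtain ⟨m, rfl⟩ := Nat.exists_eq_add_one_of_ne_zero hk.ne'
  obtain ⟨t, D, -, hD, hprod⟩ :=
    exists_vadd_prod_card_le_card_sub_pow_mul_card_iInter (Icc 1 (n : ℤ)) m B hB
  refine ⟨t, ?_⟩
  have hinter : ⋂ i, (fun b => b + t i) '' (B i : Set ℤ) = D := by
    simp_rw [hD, add_comm _ (t _), ← vadd_eq_add, Set.image_vadd]
  have hpow_le : (δ * n) ^ (m + 1) ≤ (2 * n) ^ m * (#D : ℝ) :=
    calc (δ * n) ^ (m + 1) = ∏ _i : Fin (m + 1), δ * (n : ℝ) := by simp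
      _ ≤ ∏ i, (#(B i) : ℝ) :=
        prod_le_prod (fun _ _ => by have := hδ.1; positivity) fun i _ => hBcard i
      _ ≤ (2 * n) ^ m * #D := by
        exact_mod_cast hprod.trans
          (Nat.mul_le_mul_right _ (Nat.pow_le_pow_left (card_Icc_sub_Icc_le n) m))
  rw [hinter, Set.ncard_coe_finset, Nat.add_sub_cancel,
    ← mul_le_mul_iff_right₀ (by positivity : (0 : ℝ) < (2 * n) ^ m)]
  refine (le_of_eq ?_).trans hpow_le
  field_simp
  ring
end
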